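/- arXiv:2109.06003 — 12 statements merged into one kernel-verified Lean document; each statement's English description precedes it below -/
import Mathlib

section
/- If φ is a continuous semiflow on a metric space (X,d) satisfying: for every ε>0 there exists δ>0 such that for all x,y in X and all continuous, surjective, strictly increasing s:[0,∞)→[0,∞) with s(0)=0, if d(φ_t(x),φ_{s(t)}(y))<δ for all t≥0 then y=φ_{t₀}(x) for some t₀∈[0,ε), then φ_t is the identity map on X for every t≥0. -/
open scoped NNReal
open Filter Topology

def IsSemiflow {X : Type*} [TopologicalSpace X] (φ : X → ℝ≥0 → X) : Prop :=
  Continuous (fun p : X × ℝ≥0 => φ p.1 p.2) ∧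
  (∀ x, φ x 0 = x) ∧
  (∀ x t s, φ (φ x t) s = φ x (t + s))

def Hplus (s : ℝ≥0 → ℝ≥0) : Prop :=
  Continuous s ∧ StrictMono s ∧ Function.Surjective s ∧ s 0 = 0

/-- Expansiveness in the sense of Alves–Carvalho–Siqueira (with `H⁺`). -/
def Expansive {X : Type*} [MetricSpace X] (φ : X → ℝ≥0 → X) : Prop :=
  ∀ ε : ℝ, 0 < ε → ∃ δ : ℝ, 0 < δ ∧ ∀ x y : X, ∀ s : ℝ≥0 → ℝ≥0, Hplus s →
    (∀ t, dist (φ x t) (φ y (s t)) < δ) →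
    ∃ t₀ : ℝ≥0, (t₀ : ℝ) < ε ∧ y = φ x t₀

/-- Positive expansiveness (symmetric version). -/
def PosExpansive {X : Type*} [MetricSpace X] (φ : X → ℝ≥0 → X) : Prop :=
  ∀ ε : ℝ, 0 < ε → ∃ δ : ℝ, 0 < δ ∧ ∀ x y : X, ∀ s : ℝ≥0 → ℝ≥0, Hplus s →
    (∀ t, dist (φ x t) (φ y (s t)) < δ) →
    ∃ t₀ : ℝ≥0, (t₀ : ℝ) < ε ∧ (y = φ x t₀ ∨ x = φ y t₀)

def posOrbit {X : Type*} (φ : X → ℝ≥0 → X) (x : X) : Set X := Set.range (φ x)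

def preOrbit {X : Type*} (φ : X → ℝ≥0 → X) (x : X) : Set X := {y | ∃ t, φ y t = x}

noncomputable def tau {X : Type*} (φ : X → ℝ≥0 → X) (x y : X) : ℝ≥0 :=
  sInf {t : ℝ≥0 | φ y t = x}

def IsSingularity {X : Type*} (φ : X → ℝ≥0 → X) (x : X) : Prop :=
  posOrbit φ x = {x} ∧ preOrbit φ x = {x}

def IsEndPoint {X : Type*} (φ : X → ℝ≥0 → X) (x : X) : Prop :=
  posOrbit φ x = {x} ∧ preOrbit φ x ≠ {x}

def IsPeriodicPoint {X : Type*} (φ : X → ℝ≥0 → X) (x : X) : Prop :=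
  (∃ t₀ : ℝ≥0, 0 < t₀ ∧ φ x t₀ = x) ∧ posOrbit φ x ≠ {x}

def Xtail {X : Type*} (φ : X → ℝ≥0 → X) : Set X :=
  ⋃ x ∈ {x | IsEndPoint φ x}, preOrbit φ x

def Xsing {X : Type*} (φ : X → ℝ≥0 → X) : Set X := {x | IsSingularity φ x}

def limitSet {X : Type*} [TopologicalSpace X] (φ : X → ℝ≥0 → X) (y : X) : Set X :=
  {z | ∃ u : ℕ → ℝ≥0, Tendsto u atTop atTop ∧ Tendsto (fun n => φ y (u n)) atTop (𝓝 z)}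

/-!
For small `c > 0`, the orbit of `φ x c` stays `δ`-close to the orbit of `x` reparametrized by
`t ↦ t + min t c`, so expansiveness gives `x = φ x (c + t₀)` with `c + t₀` arbitrarily small and
positive. Hence the periods of `x`, a closed additive submonoid of `ℝ≥0`, are dense, i.e. all
of `ℝ≥0`.
-/

namespace IsSemiflow

variable {X : Type*} [TopologicalSpace X] {φ : X → ℝ≥0 → X}

theorem continuous_orbit (hφ : IsSemiflow φ) (x : X) : Continuous (φ x) :=
  hφ.1.comp (Continuous.prodMk_right x)

def periods (hφ : IsSemiflow φ) (x : X) : AddSubmonoid ℝ≥0 where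
  carrier := {t | φ x t = x}
  add_mem' {a b} ha hb := by
    change φ x (a + b) = x
    rw [← hφ.2.2, ha, hb]
  zero_mem' := hφ.2.1 x

theorem mem_periods (hφ : IsSemiflow φ) {x : X} {t : ℝ≥0} : t ∈ hφ.periods x ↔ φ x t = x :=
  Iff.rfl

theorem isClosed_periods [T2Space X] (hφ : IsSemiflow φ) (x : X) :
    IsClosed (hφ.periods x : Set ℝ≥0) :=
  isClosed_eq (hφ.continuous_orbit x) continuous_const

end IsSemiflow

theorem NNReal.addSubmonoid_eq_top_of_isClosed {M : AddSubmonoid ℝ≥0} (hM : IsClosed (M : Set ℝ≥0))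
    (hsmall : ∀ ε, 0 < ε → ∃ p ∈ M, 0 < p ∧ p < ε) : M = ⊤ := by
  refine (AddSubmonoid.eq_top_iff' M).2 fun t => ?_
  rw [← SetLike.mem_coe, ← hM.closure_eq, Metric.mem_closure_iff]
  intro ε hε
  obtain ⟨p, hpM, hp, hpε⟩ := hsmall ε.toNNReal (Real.toNNReal_pos.2 hε)
  set k := ⌊t / p⌋₊
  have hle : k * p ≤ t := (le_div_iff₀ hp).1 (Nat.floor_le zero_le)
  have hlt : t < k * p + p := by
    rw [← add_one_mul, ← div_lt_iff₀ hp]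
    exact Nat.lt_floor_add_one _
  refine ⟨k * p, by simpa [nsmul_eq_mul] using M.nsmul_mem hpM k, ?_⟩
  have hpε' : (p : ℝ) < ε := Real.lt_toNNReal_iff_coe_lt.1 hpε
  have hle' : (k : ℝ) * p ≤ t := by exact_mod_cast hle
  have hlt' : (t : ℝ) < k * p + p := by exact_mod_cast hlt
  rw [NNReal.dist_eq, NNReal.coe_mul, NNReal.coe_natCast, abs_lt]
  constructor <;> linarith

theorem hplus_add_min (c : ℝ≥0) : Hplus fun t => t + min t c := by
  have hcont : Continuous fun t : ℝ≥0 => t + min t c :=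
    continuous_id.add (continuous_id.min continuous_const)
  refine ⟨hcont, fun a b hab => add_lt_add_of_lt_of_le hab (min_le_min_right c hab.le), ?_, by simp⟩
  refine hcont.surjective (tendsto_atTop_mono (fun _ => le_self_add) tendsto_id) ?_
  rw [atBot_eq_pure_of_isBot isBot_bot]
  simp

namespace IsSemiflow

variable {X : Type*} [MetricSpace X] {φ : X → ℝ≥0 → X}

/-- Up to time `c` both orbits stay near `x`; from then on the reparametrization has caught up
with the shift by `c`, and they coincide. -/
theorem dist_shift_reparam_lt (hφ : IsSemiflow φ) {x : X} {c : ℝ≥0} {δ : ℝ}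
    (hnear : ∀ u ≤ 2 * c, dist (φ x u) x < δ / 2) (t : ℝ≥0) :
    dist (φ (φ x c) t) (φ x (t + min t c)) < δ := by
  rw [hφ.2.2]
  rcases le_total c t with hct | htc
  · have hδ : 0 < δ := by simpa [hφ.2.1] using hnear 0 zero_le
    rw [min_eq_right hct, add_comm c t, dist_self]
    exact hδ
  · calc dist (φ x (c + t)) (φ x (t + min t c))
        ≤ dist (φ x (c + t)) x + dist (φ x (t + min t c)) x := dist_triangle_right _ _ _
      _ < δ / 2 + δ / 2 := by
          gcongr
          · exact hnear _ (by rw [two_mul]; gcongr)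
          · exact hnear _ (by rw [two_mul]; gcongr; exact min_le_right t c)
      _ = δ := add_halves δ

end IsSemiflow

theorem Expansive.exists_pos_mem_periods_lt {X : Type*} [MetricSpace X] {φ : X → ℝ≥0 → X}
    (hexp : Expansive φ) (hφ : IsSemiflow φ) (x : X) {η : ℝ≥0} (hη : 0 < η) :
    ∃ p ∈ hφ.periods x, 0 < p ∧ p < η := by
  obtain ⟨δ, hδ, hexpδ⟩ := hexp (η / 2 : ℝ≥0) (NNReal.coe_pos.2 (half_pos hη))
  have hφx : Tendsto (φ x) (𝓝 0) (𝓝 x) := by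
    simpa [hφ.2.1] using (hφ.continuous_orbit x).tendsto 0
  obtain ⟨r, hr, hrx⟩ := (nhds_bot_basis (α := ℝ≥0)).mem_iff.1
    (hφx (Metric.ball_mem_nhds x (half_pos hδ)))
  obtain ⟨c, hc, hcr⟩ := exists_between (lt_min (half_pos hr) (half_pos hη))
  have hnear : ∀ u ≤ 2 * c, dist (φ x u) x < δ / 2 := fun u hu =>
    hrx (hu.trans_lt ((lt_div_iff₀' two_pos).1 (hcr.trans_le (min_le_left _ _))))
  obtain ⟨t₀, ht₀, hxt₀⟩ := hexpδ (φ x c) x _ (hplus_add_min c) (hφ.dist_shift_reparam_lt hnear)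
  refine ⟨c + t₀, hφ.mem_periods.2 ?_, hc.trans_le le_self_add, ?_⟩
  · rw [← hφ.2.2, ← hxt₀]
  · calc c + t₀ < η / 2 + η / 2 := add_lt_add (hcr.trans_le (min_le_right _ _)) (mod_cast ht₀)
      _ = η := add_halves η

theorem stmt0 {X : Type*} [MetricSpace X] (φ : X → ℝ≥0 → X)
    (hφ : IsSemiflow φ) (hexp : Expansive φ) :
    ∀ t : ℝ≥0, ∀ x : X, φ x t = x := by
  intro t x
  have hper : hφ.periods x = ⊤ := NNReal.addSubmonoid_eq_top_of_isClosed (hφ.isClosed_periods x)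
    fun _ hε => hexp.exists_pos_mem_periods_lt hφ x hε
  exact hφ.mem_periods.1 (hper ▸ AddSubmonoid.mem_top t)
end

section
/- If φ is a continuous semiflow on a metric space (X,d) satisfying: for every ε>0 there exists δ>0 such that for all x,y in X and all s in H⁺ with d(φ_t(x),φ_{s(t)}(y))<δ for all t≥0 there is t₀∈[0,ε) with y=φ_{t₀}(x), then X is uniformly discrete: there exists ρ>0 such that d(x,y)≥ρ for all distinct x,y in X. -/
open scoped NNReal
open Filter Topology

-- helper: the reparametrization
lemma myHplus (r : ℝ≥0) (hr : 0 < r) :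
    Hplus (fun t => if t ≤ r then 2 * t else t + r) := by
  refine ⟨?_, ?_, ?_, by simp⟩
  · apply Continuous.if_le (by fun_prop) (by fun_prop) continuous_id continuous_const
    intro t ht; simp only [id_eq] at ht; subst ht; ring
  · intro a b hab
    by_cases ha : a ≤ r <;> by_cases hb : b ≤ r <;> simp only [ha, hb, if_true, if_false,
      if_pos, if_neg]
    · exact mul_lt_mul_of_pos_left hab two_pos
    · push_neg at hb
      calc 2 * a ≤ 2 * r := by
              exact mul_le_mul_of_nonneg_left ha (by positivity)
        _ = r + r := by ring
        _ < b + r := by exact add_lt_add_of_lt_of_le hb le_rfl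
    · exact absurd (hab.le.trans hb) ha
    · exact add_lt_add_of_lt_of_le hab le_rfl
  · intro u
    by_cases hu : u ≤ 2 * r
    · refine ⟨u / 2, ?_⟩
      have h2 : u / 2 ≤ r := by
        rw [div_le_iff₀ (by norm_num : (0:ℝ≥0) < 2)]
        rwa [mul_comm] at hu
      simp [h2, mul_div_cancel₀]
    · push_neg at hu
      refine ⟨u - r, ?_⟩
      have hr2 : r ≤ 2 * r := by rw [two_mul]; exact le_self_add
      have hru : r ≤ u := le_of_lt (lt_of_le_of_lt hr2 hu)
      have : ¬ (u - r ≤ r) := by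
        intro h
        have h2 := tsub_le_iff_right.mp h
        exact absurd (h2.trans_eq (two_mul r).symm) (not_le.mpr hu)
      simp only [this, if_false]
      exact tsub_add_cancel_of_le hru

-- orbit continuity at 0
lemma cont_at_zero {X : Type*} [MetricSpace X] {φ : X → ℝ≥0 → X} (hφ : IsSemiflow φ)
    (x : X) {η : ℝ} (hη : 0 < η) :
    ∃ β : ℝ, 0 < β ∧ ∀ a : ℝ≥0, (a : ℝ) < β → dist (φ x a) x < η := by
  have hc : Continuous (fun t : ℝ≥0 => φ x t) := hφ.1.comp (Continuous.prodMk_right x)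
  have := (Metric.continuousAt_iff.mp (hc.continuousAt (x := 0))) η hη
  obtain ⟨β, hβ, h⟩ := this
  refine ⟨β, hβ, fun a ha => ?_⟩
  have hd : dist a (0:ℝ≥0) < β := by rwa [NNReal.dist_eq, NNReal.coe_zero, sub_zero,
    abs_of_nonneg a.coe_nonneg]
  have := h hd
  rwa [hφ.2.1 x] at this

lemma small_period {X : Type*} [MetricSpace X] {φ : X → ℝ≥0 → X}
    (hφ : IsSemiflow φ) (hexp : Expansive φ) (x : X) {β : ℝ} (hβ : 0 < β) :
    ∃ p : ℝ≥0, 0 < p ∧ (p : ℝ) < β ∧ φ x p = x := by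
  obtain ⟨δ, hδ, hkey⟩ := hexp (β / 2) (by positivity)
  obtain ⟨β', hβ', hcont⟩ := cont_at_zero hφ x (half_pos hδ)
  set rr : ℝ := min (β / 2) β' / 4 with hrr
  have hrr0 : 0 < rr := by positivity
  set r : ℝ≥0 := rr.toNNReal with hr
  have hrc : (r : ℝ) = rr := Real.coe_toNNReal _ hrr0.le
  have hr0 : 0 < r := by rw [← NNReal.coe_lt_coe, hrc]; exact hrr0
  -- any time ≤ 2r is within the continuity window
  have hwin : ∀ a : ℝ≥0, a ≤ 2 * r → dist (φ x a) x < δ / 2 := by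
    intro a ha
    apply hcont
    have : (a : ℝ) ≤ 2 * rr := by
      calc (a:ℝ) ≤ ((2 * r : ℝ≥0) : ℝ) := NNReal.coe_le_coe.mpr ha
        _ = 2 * rr := by push_cast [hrc]; ring
    calc (a : ℝ) ≤ 2 * rr := this
      _ = min (β / 2) β' / 2 := by rw [hrr]; ring
      _ < β' := by
          have : min (β / 2) β' ≤ β' := min_le_right _ _
          linarith
  set s : ℝ≥0 → ℝ≥0 := fun t => if t ≤ r then 2 * t else t + r with hs
  have hdist : ∀ t, dist (φ (φ x r) t) (φ x (s t)) < δ := by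
    intro t
    rw [hφ.2.2]
    by_cases ht : t ≤ r
    · have h1 : dist (φ x (r + t)) x < δ / 2 := hwin _ (by rw [two_mul]; exact add_le_add le_rfl ht)
      have h2 : dist (φ x (2 * t)) x < δ / 2 := hwin _ (by
        exact mul_le_mul_of_nonneg_left ht (by positivity))
      have h3 := dist_triangle (φ x (r + t)) x (φ x (2 * t))
      rw [dist_comm x] at h3
      simp only [hs, if_pos ht]
      linarith
    · simp only [hs, if_neg ht]
      rw [add_comm]
      simpa using hδ
  obtain ⟨t₀, ht₀, hx⟩ := hkey (φ x r) x s (myHplus r hr0) hdist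
  rw [hφ.2.2] at hx
  refine ⟨r + t₀, by positivity, ?_, hx.symm⟩
  have hrb : (r : ℝ) < β / 2 := by
    rw [hrc, hrr]
    have : min (β / 2) β' ≤ β / 2 := min_le_left _ _
    linarith
  push_cast
  linarith

lemma period_iter {X : Type*} [TopologicalSpace X] {φ : X → ℝ≥0 → X}
    (hφ : IsSemiflow φ) {x : X} {p : ℝ≥0} (hp : φ x p = x) :
    ∀ n : ℕ, ∀ u : ℝ≥0, φ x ((n : ℝ≥0) * p + u) = φ x u := by
  intro n
  induction n with
  | zero => simp
  | succ n ih =>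
      intro u
      have : ((n + 1 : ℕ) : ℝ≥0) * p + u = p + ((n : ℝ≥0) * p + u) := by push_cast; ring
      rw [this, ← hφ.2.2, hp, ih]

lemma all_fixed {X : Type*} [MetricSpace X] {φ : X → ℝ≥0 → X}
    (hφ : IsSemiflow φ) (hexp : Expansive φ) (x : X) (t : ℝ≥0) : φ x t = x := by
  have key : ∀ η : ℝ, 0 < η → dist (φ x t) x < η := by
    intro η hη
    obtain ⟨β', hβ', hcont⟩ := cont_at_zero hφ x hη
    obtain ⟨p, hp0, hpβ, hp⟩ := small_period hφ hexp x hβ'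
    set n : ℕ := ⌊(t : ℝ) / (p : ℝ)⌋₊ with hn
    have hpc : (0:ℝ) < (p:ℝ) := hp0
    have h1 : (n : ℝ) * p ≤ t := by
      rw [← le_div_iff₀ hpc]
      exact Nat.floor_le (by positivity)
    have h2 : (t : ℝ) < (n + 1) * p := by
      rw [← div_lt_iff₀ hpc]
      exact Nat.lt_floor_add_one _
    have hle : (n : ℝ≥0) * p ≤ t := by
      rw [← NNReal.coe_le_coe]; push_cast; exact h1
    set q : ℝ≥0 := t - (n : ℝ≥0) * p with hq
    have ht : t = (n : ℝ≥0) * p + q := by rw [hq, add_tsub_cancel_of_le hle]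
    have hqp : (q : ℝ) < β' := by
      have : (q : ℝ) = (t : ℝ) - (n : ℝ) * p := by
        rw [hq, NNReal.coe_sub hle]; push_cast; ring
      rw [this]
      nlinarith
    rw [ht, period_iter hφ hp]
    exact hcont q hqp
  have h0 : dist (φ x t) x ≤ 0 := by
    by_contra h
    push_neg at h
    exact absurd (key _ h) (lt_irrefl _)
  exact dist_le_zero.mp h0



theorem stmt1 {X : Type*} [MetricSpace X] (φ : X → ℝ≥0 → X)
    (hφ : IsSemiflow φ) (hexp : Expansive φ) :
    ∃ ρ : ℝ, 0 < ρ ∧ ∀ x y : X, x ≠ y → ρ ≤ dist x y := by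
  obtain ⟨δ, hδ, hkey⟩ := hexp 1 one_pos
  refine ⟨δ, hδ, fun x y hxy => ?_⟩
  by_contra h
  push_neg at h
  have hid : Hplus id := ⟨continuous_id, strictMono_id, Function.surjective_id, rfl⟩
  have hdist : ∀ t, dist (φ x t) (φ y (id t)) < δ := by
    intro t
    rw [all_fixed hφ hexp x t, id_eq, all_fixed hφ hexp y t]
    exact h
  obtain ⟨t₀, _, hy⟩ := hkey x y id hid hdist
  rw [all_fixed hφ hexp x t₀] at hy
  exact hxy hy.symm
end

section
/- If (X,d) is a compact metric space and φ is a continuous semiflow on X satisfying the expansiveness property (for every ε>0 there exists δ>0 such that for all x,y∈X and s∈H⁺ with d(φ_t(x),φ_{s(t)}(y))<δ for all t≥0, there is t₀∈[0,ε) with y=φ_{t₀}(x)), then X is a finite set. -/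
open scoped NNReal
open Filter Topology

section Aux

variable {X : Type*} [MetricSpace X] [CompactSpace X] (φ : X → ℝ≥0 → X)

lemma aux_unif (hφ : IsSemiflow φ) {δ : ℝ} (hδ : 0 < δ) :
    ∃ η : ℝ, 0 < η ∧ ∀ (x : X) (a b : ℝ≥0), dist a b < η → dist (φ x a) (φ x b) < δ := by
  haveI : CompactSpace (Set.Icc (0:ℝ≥0) 1) := isCompact_iff_compactSpace.mp isCompact_Icc
  set f : X × Set.Icc (0:ℝ≥0) 1 → X := fun p => φ p.1 p.2 with hf
  have hfc : Continuous f :=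
    hφ.1.comp (continuous_fst.prodMk (continuous_subtype_val.comp continuous_snd))
  have huc := CompactSpace.uniformContinuous_of_continuous hfc
  rw [Metric.uniformContinuous_iff] at huc
  obtain ⟨η₀, hη₀, H⟩ := huc δ hδ
  refine ⟨min η₀ 1, lt_min hη₀ one_pos, ?_⟩
  have key : ∀ (x : X) (a b : ℝ≥0), a ≤ b → dist a b < min η₀ 1 →
      dist (φ x a) (φ x b) < δ := by
    intro x a b hab h
    have hdist : dist a b = ((b - a : ℝ≥0) : ℝ) := by
      rw [NNReal.dist_eq, NNReal.coe_sub hab, abs_sub_comm,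
        abs_of_nonneg (by simpa using (NNReal.coe_le_coe.mpr hab))]
    have h1 : ((b - a : ℝ≥0) : ℝ) < η₀ := by
      rw [← hdist]; exact h.trans_le (min_le_left _ _)
    have h2 : (b - a : ℝ≥0) ≤ 1 := by
      have : ((b - a : ℝ≥0) : ℝ) ≤ 1 := by
        rw [← hdist]; exact (h.trans_le (min_le_right _ _)).le
      exact_mod_cast this
    set w := φ x a with hw
    have e1 : f (w, ⟨0, ⟨le_refl _, zero_le_one⟩⟩) = w := hφ.2.1 w
    have e2 : f (w, ⟨b - a, ⟨zero_le, h2⟩⟩) = φ x b := by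
      show φ (φ x a) (b - a) = φ x b
      rw [hφ.2.2, add_tsub_cancel_of_le hab]
    rw [← e1, ← e2]
    apply H
    rw [Prod.dist_eq]
    have : dist ((⟨0, ⟨le_refl _, zero_le_one⟩⟩ : Set.Icc (0:ℝ≥0) 1))
        (⟨b - a, ⟨zero_le, h2⟩⟩ : Set.Icc (0:ℝ≥0) 1) = ((b - a : ℝ≥0) : ℝ) := by
      rw [Subtype.dist_eq, NNReal.dist_eq]
      simp
    rw [this, dist_self]
    simpa [max_eq_right (NNReal.coe_nonneg (b - a))] using h1
  intro x a b h
  rcases le_total a b with hab | hba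
  · exact key x a b hab h
  · rw [dist_comm] at h ⊢
    exact key x b a hba h

lemma aux_period (hφ : IsSemiflow φ) (hexp : Expansive φ) :
    ∀ (x : X) (ε : ℝ), 0 < ε → ∃ p : ℝ≥0, 0 < p ∧ (p : ℝ) < ε ∧ φ x p = x := by
  intro x ε hε
  obtain ⟨δ, hδ, hmain⟩ := hexp (ε / 2) (by positivity)
  obtain ⟨η, hη, hunif⟩ := aux_unif φ hφ hδ
  set rr : ℝ := min η ε / 2 with hrr_def
  have hrr : 0 < rr := by positivity
  set r : ℝ≥0 := ⟨rr, hrr.le⟩ with hr_def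
  have hrη : (r : ℝ) < η := by
    show rr < η
    calc rr ≤ η / 2 := by
          rw [hrr_def]; gcongr; exact min_le_left _ _
      _ < η := by linarith
  have hrε : (r : ℝ) ≤ ε / 2 := by
    show rr ≤ ε / 2
    rw [hrr_def]; gcongr; exact min_le_right _ _
  set s : ℝ≥0 → ℝ≥0 := fun u => min (u + u) (u + r) with hs_def
  have hcont : Continuous s :=
    (continuous_id.add continuous_id).min (continuous_id.add continuous_const)
  have hs : Hplus s := by
    refine ⟨hcont, ?_, ?_, ?_⟩
    · intro a b hab
      exact lt_min ((min_le_left _ _).trans_lt (add_lt_add hab hab))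
        ((min_le_right _ _).trans_lt (add_lt_add_left hab r))
    · intro c
      have hc : c ∈ Set.Icc (s 0) (s c) := by
        constructor
        · simp [hs_def]
        · exact le_min le_self_add le_self_add
      obtain ⟨u, _, hu⟩ := intermediate_value_Icc (zero_le : (0:ℝ≥0) ≤ c) hcont.continuousOn hc
      exact ⟨u, hu⟩
    · simp [hs_def]
  have hshadow : ∀ t, dist (φ (φ x r) t) (φ x (s t)) < δ := by
    intro u
    rw [hφ.2.2]
    apply hunif
    have h1 : s u ≤ r + u := by rw [add_comm]; exact min_le_right _ _
    have h2 : u ≤ s u := le_min le_self_add le_self_add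
    rw [NNReal.dist_eq, abs_of_nonneg (by simpa using (NNReal.coe_le_coe.mpr h1))]
    have : ((r + u : ℝ≥0) : ℝ) - ((s u : ℝ≥0) : ℝ) ≤ (r : ℝ) := by
      have := NNReal.coe_le_coe.mpr h2
      push_cast
      linarith
    exact this.trans_lt hrη
  obtain ⟨t₀, ht₀, hx⟩ := hmain (φ x r) x s hs hshadow
  refine ⟨r + t₀, ?_, ?_, ?_⟩
  · exact lt_of_lt_of_le (by exact_mod_cast hrr) le_self_add
  · push_cast
    have : (r : ℝ) ≤ ε / 2 := hrε
    linarith [ht₀]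
  · rw [← hφ.2.2, ← hx]

lemma aux_fixed (hφ : IsSemiflow φ) (hexp : Expansive φ) :
    ∀ (x : X) (t : ℝ≥0), φ x t = x := by
  intro x t
  apply eq_of_forall_dist_le
  intro δ hδ
  obtain ⟨η, hη, hunif⟩ := aux_unif φ hφ hδ
  obtain ⟨p, hp, hpη, hpx⟩ := aux_period φ hφ hexp x η hη
  have hiter : ∀ k : ℕ, φ x ((k : ℝ≥0) * p) = x := by
    intro k
    induction k with
    | zero => simpa using hφ.2.1 x
    | succ n ih =>
      have : ((n + 1 : ℕ) : ℝ≥0) * p = (n : ℝ≥0) * p + p := by push_cast; ring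
      rw [this, ← hφ.2.2, ih, hpx]
  set k : ℕ := ⌈(t : ℝ) / (p : ℝ)⌉₊ with hk_def
  have hp' : (0 : ℝ) < (p : ℝ) := by exact_mod_cast hp
  have hub : ((k : ℝ)) < (t : ℝ) / (p : ℝ) + 1 :=
    Nat.ceil_lt_add_one (by positivity)
  have hlb : (t : ℝ) / (p : ℝ) ≤ (k : ℝ) := Nat.le_ceil _
  have hd : dist t ((k : ℝ≥0) * p) < η := by
    rw [NNReal.dist_eq]
    push_cast
    rw [abs_sub_comm, abs_of_nonneg]
    · have : (k : ℝ) * (p : ℝ) < (t : ℝ) + (p : ℝ) := by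
        calc (k : ℝ) * (p : ℝ) < ((t : ℝ) / (p : ℝ) + 1) * (p : ℝ) := by
              exact mul_lt_mul_of_pos_right hub hp'
          _ = (t : ℝ) + (p : ℝ) := by field_simp
      linarith [hpη]
    · have : (t : ℝ) ≤ (k : ℝ) * (p : ℝ) := by
        calc (t : ℝ) = (t : ℝ) / (p : ℝ) * (p : ℝ) := by field_simp
          _ ≤ (k : ℝ) * (p : ℝ) := by exact mul_le_mul_of_nonneg_right hlb hp'.le
      linarith
  have := hunif x t ((k : ℝ≥0) * p) hd
  rw [hiter k] at this
  exact this.le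

end Aux

theorem stmt2 {X : Type*} [MetricSpace X] [CompactSpace X] (φ : X → ℝ≥0 → X)
    (hφ : IsSemiflow φ) (hexp : Expansive φ) :
    Finite X := by
  obtain ⟨δ, hδ, hmain⟩ := hexp 1 one_pos
  have hfix := aux_fixed φ hφ hexp
  have hsep : ∀ x y : X, dist x y < δ → y = x := by
    intro x y h
    have hid : Hplus (id : ℝ≥0 → ℝ≥0) :=
      ⟨continuous_id, strictMono_id, Function.surjective_id, rfl⟩
    have hclose : ∀ t, dist (φ x t) (φ y (id t)) < δ := by
      intro t
      simp only [id_eq]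
      rw [hfix x t, hfix y t]
      exact h
    obtain ⟨t₀, _, hy⟩ := hmain x y id hid hclose
    rw [hy, hfix]
  haveI : DiscreteTopology X := by
    rw [discreteTopology_iff_isOpen_singleton]
    intro x
    have : ({x} : Set X) = Metric.ball x δ := by
      apply Set.eq_of_subset_of_subset
      · intro y hy
        rw [Set.mem_singleton_iff] at hy
        subst hy
        simpa using hδ
      · intro y hy
        rw [Metric.mem_ball, dist_comm] at hy
        exact hsep x y hy
    rw [this]
    exact Metric.isOpen_ball
  exact finite_of_compact_of_discrete
end

section
/- Let φ be a positive expansive continuous semiflow on a metric space (X,d). For every x in X the pre-orbit O⁻(x) = {y : φ_t(y)=x for some t≥0} is unbranched, i.e., the map τ_x: O⁻(x)→[0,∞) defined by τ_x(y)=inf{t≥0 : φ_t(y)=x} is injective. -/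
open scoped NNReal
open Filter Topology

private lemma semiflow_cont {X : Type*} [TopologicalSpace X] {φ : X → ℝ≥0 → X}
    (hφ : IsSemiflow φ) (y : X) : Continuous fun t => φ y t :=
  hφ.1.comp (continuous_const.prodMk continuous_id)

private lemma fix_of_small {X : Type*} [MetricSpace X] {φ : X → ℝ≥0 → X}
    (hφ : IsSemiflow φ) (x : X)
    (h : ∀ ε : ℝ, 0 < ε → ∃ p : ℝ≥0, 0 < p ∧ (p : ℝ) < ε ∧ φ x p = x) :
    ∀ t, φ x t = x := by
  have hcont := semiflow_cont hφ x
  have hP : IsClosed ((fun t => φ x t) ⁻¹' {x}) := isClosed_singleton.preimage hcont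
  intro t
  have hmul : ∀ p : ℝ≥0, φ x p = x → ∀ n : ℕ, φ x ((n : ℝ≥0) * p) = x := by
    intro p hp n
    induction n with
    | zero => simpa using hφ.2.1 x
    | succ n ih =>
        have he : ((n + 1 : ℕ) : ℝ≥0) * p = (n : ℝ≥0) * p + p := by push_cast; ring
        rw [he, ← hφ.2.2, ih, hp]
  have ht : t ∈ closure ((fun t => φ x t) ⁻¹' {x}) := by
    rw [Metric.mem_closure_iff]
    intro ε hε
    obtain ⟨p, hp0, hpε, hpfix⟩ := h ε hε
    refine ⟨(⌈(t : ℝ) / (p : ℝ)⌉₊ : ℝ≥0) * p, hmul p hpfix _, ?_⟩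
    set n := ⌈(t : ℝ) / (p : ℝ)⌉₊ with hn
    have hp0' : (0 : ℝ) < p := hp0
    have h1 : (t : ℝ) ≤ n * p := by
      rw [← div_le_iff₀ hp0']
      exact Nat.le_ceil _
    have h2 : (n : ℝ) * p < t + p := by
      have hc := Nat.ceil_lt_add_one (div_nonneg t.coe_nonneg hp0'.le)
      calc (n : ℝ) * p < ((t : ℝ) / p + 1) * p := by
            apply mul_lt_mul_of_pos_right _ hp0'
            exact_mod_cast hc
        _ = t + p := by field_simp
    have hd : dist t ((n : ℝ≥0) * p) = (n : ℝ) * p - t := by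
      rw [NNReal.dist_eq]
      push_cast
      rw [abs_of_nonpos (by linarith)]; ring
    rw [hd]; linarith
  exact hP.closure_subset ht

private lemma helper2 {X : Type*} {φ : X → ℝ≥0 → X}
    (hφ : ∀ x t s, φ (φ x t) s = φ x (t + s)) {x y z : X} {τ b t₀ : ℝ≥0}
    (hy : φ y τ = x) (hz : φ z τ = x) (hb : b ≤ τ)
    (heq : φ z b = φ y (b + t₀)) : φ x t₀ = x := by
  have h := congrArg (fun w => φ w (τ - b)) heq
  simp only [hφ] at h
  rw [add_tsub_cancel_of_le hb] at h
  have harith : b + t₀ + (τ - b) = τ + t₀ := by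
    rw [add_right_comm, add_tsub_cancel_of_le hb]
  rw [harith, hz, ← hφ, hy] at h
  exact h.symm

private lemma helper1 {X : Type*} {φ : X → ℝ≥0 → X}
    (hφ : ∀ x t s, φ (φ x t) s = φ x (t + s)) {x y z : X} {τ b t₀ : ℝ≥0}
    (hy : φ y τ = x)
    (hτz : sInf {t : ℝ≥0 | φ z t = x} = τ)
    (hb : b < τ) (ht₀ : 0 < t₀)
    (heq : φ z b = φ y (b + t₀))
    (hfix : ∀ t, φ x t = x) : False := by
  have hτpos : 0 < τ := (zero_le : 0 ≤ b).trans_lt hb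
  obtain ⟨s, hsτ, hs⟩ : ∃ s : ℝ≥0, s < τ ∧ φ z s = x := by
    by_cases hcase : b + t₀ ≤ τ
    · refine ⟨τ - t₀, tsub_lt_self hτpos ht₀, ?_⟩
      have h := congrArg (fun w => φ w (τ - (b + t₀))) heq
      simp only [hφ] at h
      rw [add_tsub_cancel_of_le hcase, hy] at h
      have harith : b + (τ - (b + t₀)) = τ - t₀ := by
        rw [tsub_add_eq_tsub_tsub_swap, add_tsub_cancel_of_le (le_tsub_of_add_le_right hcase)]
      rwa [harith] at h
    · push_neg at hcase
      refine ⟨b, hb, ?_⟩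
      have harith : b + t₀ = τ + (b + t₀ - τ) := (add_tsub_cancel_of_le hcase.le).symm
      rw [heq, harith, ← hφ, hy, hfix]
  have hle : τ ≤ s := hτz ▸ csInf_le (OrderBot.bddBelow _) hs
  exact absurd hle (not_le.mpr hsτ)

theorem stmt3 {X : Type*} [MetricSpace X] (φ : X → ℝ≥0 → X)
    (hφ : IsSemiflow φ) (hexp : PosExpansive φ) :
    ∀ x : X, Set.InjOn (tau φ x) (preOrbit φ x) := by
  intro x y hy z hz htau
  obtain ⟨ty, hty⟩ := hy
  obtain ⟨tz, htz⟩ := hz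
  set τ := tau φ x y with hτdef
  have hτy : sInf {t : ℝ≥0 | φ y t = x} = τ := rfl
  have hτz : sInf {t : ℝ≥0 | φ z t = x} = τ := htau.symm
  have hclosedT : ∀ w : X, IsClosed {t : ℝ≥0 | φ w t = x} := fun w =>
    isClosed_singleton.preimage (semiflow_cont hφ w)
  have hyτ : φ y τ = x := by
    have := (hclosedT y).csInf_mem ⟨ty, hty⟩ (OrderBot.bddBelow _)
    rwa [hτy] at this
  have hzτ : φ z τ = x := by
    have := (hclosedT z).csInf_mem ⟨tz, htz⟩ (OrderBot.bddBelow _)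
    rwa [hτz] at this
  set A : Set ℝ≥0 := {s : ℝ≥0 | ∀ t, φ y (s + t) = φ z (s + t)} with hA
  have hAclosed : IsClosed A := by
    have hAi : A = ⋂ t : ℝ≥0, {s : ℝ≥0 | φ y (s + t) = φ z (s + t)} := by
      ext s; simp [hA, Set.mem_iInter]
    rw [hAi]
    refine isClosed_iInter fun t => isClosed_eq ?_ ?_
    · exact (semiflow_cont hφ y).comp (continuous_id.add continuous_const)
    · exact (semiflow_cont hφ z).comp (continuous_id.add continuous_const)
  have hτA : τ ∈ A := by
    intro t
    rw [← hφ.2.2, ← hφ.2.2, hyτ, hzτ]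
  set r := sInf A with hr
  have hrA : r ∈ A := hAclosed.csInf_mem ⟨τ, hτA⟩ (OrderBot.bddBelow _)
  have hrτ : r ≤ τ := csInf_le (OrderBot.bddBelow _) hτA
  rcases eq_zero_or_pos r with hr0 | hrpos
  · have h00 := hrA 0
    rw [hr0, zero_add, hφ.2.1, hφ.2.1] at h00
    exact h00
  exfalso
  have hw : φ y r = φ z r := by
    have h00 := hrA 0; rwa [add_zero] at h00
  have hsub : ∀ ε : ℝ, 0 < ε → ∃ t₀ η : ℝ≥0, (t₀ : ℝ) < ε ∧ 0 < η ∧ η ≤ r ∧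
      (φ z (r - η) = φ y ((r - η) + t₀) ∨ φ y (r - η) = φ z ((r - η) + t₀)) := by
    intro ε hε
    obtain ⟨δ, hδ, H⟩ := hexp ε hε
    obtain ⟨η₁, hη₁, hy₁⟩ := Metric.continuous_iff.mp (semiflow_cont hφ y) r (δ/2) (by linarith)
    obtain ⟨η₂, hη₂, hz₁⟩ := Metric.continuous_iff.mp (semiflow_cont hφ z) r (δ/2) (by linarith)
    have hcpos : (0:ℝ) < min η₁ η₂ := lt_min hη₁ hη₂
    set η : ℝ≥0 := min r (Real.toNNReal (min η₁ η₂ / 2)) with hη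
    have hηpos : 0 < η := lt_min hrpos (Real.toNNReal_pos.mpr (by linarith))
    have hηr : η ≤ r := min_le_left _ _
    have hηc : (η : ℝ) < min η₁ η₂ := by
      have h1 : (η : ℝ) ≤ ((Real.toNNReal (min η₁ η₂ / 2)) : ℝ) := by
        exact_mod_cast min_le_right r (Real.toNNReal (min η₁ η₂ / 2))
      rw [Real.coe_toNNReal _ (by linarith)] at h1
      linarith
    have hdist : ∀ t, dist (φ (φ y (r - η)) t) (φ (φ z (r - η)) (id t)) < δ := by
      intro t
      simp only [id_eq, hφ.2.2]
      by_cases htη : η ≤ t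
      · have he : (r - η) + t = r + (t - η) := by
          rw [tsub_add_eq_add_tsub hηr, add_tsub_assoc_of_le htη]
        rw [he, hrA (t - η), dist_self]
        exact hδ
      · push_neg at htη
        have ht' : (t : ℝ) < η := htη
        have hdista : dist ((r - η) + t) r < min η₁ η₂ := by
          rw [NNReal.dist_eq, NNReal.coe_add, NNReal.coe_sub hηr]
          have hre : (↑r - ↑η + ↑t - ↑r : ℝ) = ↑t - ↑η := by ring
          rw [hre, abs_of_nonpos (by linarith)]
          have ht0 := t.coe_nonneg
          linarith
        have d1 := hy₁ _ (hdista.trans_le (min_le_left _ _))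
        have d2 := hz₁ _ (hdista.trans_le (min_le_right _ _))
        have d2' : dist (φ y r) (φ z ((r - η) + t)) < δ / 2 := by
          rw [hw, dist_comm]; exact d2
        have htri := dist_triangle (φ y ((r - η) + t)) (φ y r) (φ z ((r - η) + t))
        linarith
    obtain ⟨t₀, ht₀ε, hcase⟩ := H (φ y (r - η)) (φ z (r - η)) id
      ⟨continuous_id, strictMono_id, Function.surjective_id, rfl⟩ hdist
    refine ⟨t₀, η, ht₀ε, hηpos, hηr, ?_⟩
    rcases hcase with h | h
    · exact Or.inl (h.trans (hφ.2.2 y (r - η) t₀))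
    · exact Or.inr (h.trans (hφ.2.2 z (r - η) t₀))
  have hzero : ∀ η : ℝ≥0, 0 < η → η ≤ r → φ y (r - η) = φ z (r - η) → False := by
    intro η hη hηr heq
    have hmem : r - η ∈ A := by
      intro t
      rw [← hφ.2.2, ← hφ.2.2, heq]
    have hle := csInf_le (OrderBot.bddBelow _) hmem
    rw [← hr] at hle
    exact absurd hle (not_le.mpr (tsub_lt_self hrpos hη))
  have hzero' : ∀ η : ℝ≥0, 0 < η → η ≤ r →
      (φ z (r - η) = φ y ((r - η) + 0) ∨ φ y (r - η) = φ z ((r - η) + 0)) → False := by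
    intro η hη hηr hbr
    rcases hbr with h | h
    · rw [add_zero] at h; exact hzero η hη hηr h.symm
    · rw [add_zero] at h; exact hzero η hη hηr h
  have key : ∀ ε : ℝ, 0 < ε → ∃ p : ℝ≥0, 0 < p ∧ (p : ℝ) < ε ∧ φ x p = x := by
    intro ε hε
    obtain ⟨t₀, η, ht₀ε, hηpos, hηr, hbr⟩ := hsub ε hε
    rcases eq_zero_or_pos t₀ with h0 | hpos
    · subst h0
      exact absurd (hzero' η hηpos hηr hbr) (fun h => h)
    · refine ⟨t₀, hpos, ht₀ε, ?_⟩
      have hbτ : r - η ≤ τ := tsub_le_self.trans hrτ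
      rcases hbr with h | h
      · exact helper2 hφ.2.2 hyτ hzτ hbτ h
      · exact helper2 hφ.2.2 hzτ hyτ hbτ h
  have hfix := fix_of_small hφ x key
  obtain ⟨t₀, η, ht₀ε, hηpos, hηr, hbr⟩ := hsub 1 one_pos
  rcases eq_zero_or_pos t₀ with h0 | hpos
  · subst h0
    exact hzero' η hηpos hηr hbr
  · have hbτ : r - η < τ := (tsub_lt_self hrpos hηpos).trans_le hrτ
    rcases hbr with h | h
    · exact helper1 hφ.2.2 hyτ hτz hbτ hpos h hfix
    · exact helper1 hφ.2.2 hzτ hτy hbτ hpos h hfix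
end

section
/- Let φ be a positive expansive continuous semiflow on a metric space (X,d). Then every singularity of φ (a point x with O⁺(x)=O⁻(x)={x}) is an isolated point of X. -/
open scoped NNReal
open Filter Topology

theorem stmt4 {X : Type*} [MetricSpace X] (φ : X → ℝ≥0 → X)
    (hφ : IsSemiflow φ) (hexp : PosExpansive φ)
    (x₀ : X) (hx₀ : IsSingularity φ x₀) :
    IsOpen ({x₀} : Set X) := by
  obtain ⟨hcont, hzero, hadd⟩ := hφ
  -- x₀ is fixed
  have hfix : ∀ t, φ x₀ t = x₀ := by
    intro t
    have h : φ x₀ t ∈ posOrbit φ x₀ := ⟨t, rfl⟩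
    rw [hx₀.1] at h
    exact h
  have hpre : ∀ y t, φ y t = x₀ → y = x₀ := by
    intro y t h
    have h' : y ∈ preOrbit φ x₀ := ⟨t, h⟩
    rw [hx₀.2] at h'
    exact h'
  -- periodic reduction lemma
  have key : ∀ (w : X) (p : ℝ≥0), 0 < p → φ w p = w →
      ∀ s : ℝ≥0, ∃ r, r < p ∧ φ w s = φ w r := by
    intro w p hp hper
    have main : ∀ n : ℕ, ∀ s : ℝ≥0, s ≤ n * p → ∃ r, r < p ∧ φ w s = φ w r := by
      intro n
      induction n with
      | zero =>
        intro s hs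
        simp only [Nat.cast_zero, zero_mul, le_zero_iff] at hs
        exact ⟨0, hp, by rw [hs]⟩
      | succ n ih =>
        intro s hs
        rcases lt_or_ge s p with h | h
        · exact ⟨s, h, rfl⟩
        · have hs' : s - p ≤ n * p := by
            rw [tsub_le_iff_right]
            calc s ≤ (n + 1 : ℕ) * p := hs
            _ = n * p + p := by push_cast; ring
          obtain ⟨r, hr, hr2⟩ := ih (s - p) hs'
          refine ⟨r, hr, ?_⟩
          have hsplit : φ w s = φ w (s - p) := by
            conv_lhs => rw [show s = p + (s - p) from (add_tsub_cancel_of_le h).symm]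
            rw [← hadd, hper]
          rw [hsplit, hr2]
    intro s
    obtain ⟨n, hn⟩ := exists_nat_ge (s / p)
    refine main n s ?_
    calc s = s / p * p := by field_simp
    _ ≤ n * p := by exact mul_le_mul_left hn p
  -- expansiveness constant for ε = 1
  obtain ⟨δ, hδ, hδexp⟩ := hexp 1 one_pos
  -- tube lemma: neighborhood V of x₀ with orbit within δ/2 up to time 3
  have hn : IsOpen ((fun q : X × ℝ≥0 => φ q.1 q.2) ⁻¹' Metric.ball x₀ (δ / 2)) :=
    (Metric.isOpen_ball).preimage hcont
  have hsub : ({x₀} : Set X) ×ˢ (Set.Icc (0 : ℝ≥0) 3) ⊆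
      ((fun q : X × ℝ≥0 => φ q.1 q.2) ⁻¹' Metric.ball x₀ (δ / 2)) := by
    rintro ⟨a, t⟩ ⟨ha, -⟩
    simp only [Set.mem_singleton_iff] at ha
    subst ha
    simp [Set.mem_preimage, hfix, Metric.mem_ball, half_pos hδ]
  obtain ⟨V, W, hVopen, -, hxV, hIW, hVW⟩ :=
    generalized_tube_lemma isCompact_singleton isCompact_Icc hn hsub
  have hxV' : x₀ ∈ V := hxV rfl
  have horbV : ∀ y ∈ V, ∀ t : ℝ≥0, t ≤ 3 → dist (φ y t) x₀ < δ / 2 := by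
    intro y hy t ht
    have : (y, t) ∈ V ×ˢ W := ⟨hy, hIW ⟨zero_le, ht⟩⟩
    have := hVW this
    simpa [Metric.mem_ball] using this
  -- the reparametrization
  set s : ℝ≥0 → ℝ≥0 := fun t => (2 / 3 : ℝ≥0) * min t 3 + (t - 3) with hs_def
  have hs_le : ∀ t : ℝ≥0, t ≤ 3 → s t = (2 / 3 : ℝ≥0) * t := by
    intro t ht
    simp [hs_def, min_eq_left ht, tsub_eq_zero_of_le ht]
  have hs_ge : ∀ t : ℝ≥0, 3 ≤ t → s t = 2 + (t - 3) := by
    intro t ht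
    have : (2 / 3 : ℝ≥0) * 3 = 2 := by norm_num
    simp [hs_def, min_eq_right ht, this]
  have hs_Hplus : Hplus s := by
    refine ⟨?_, ?_, ?_, ?_⟩
    · exact (continuous_const.mul (continuous_id.min continuous_const)).add
        (continuous_id.sub continuous_const)
    · intro a b hab
      rcases le_or_gt b 3 with hb | hb
      · have ha : a ≤ 3 := (hab.le.trans hb)
        rw [hs_le a ha, hs_le b hb]
        exact mul_lt_mul_of_pos_left hab (by norm_num)
      · rcases le_or_gt a 3 with ha | ha
        · rw [hs_le a ha, hs_ge b hb.le]
          have h1 : (2 / 3 : ℝ≥0) * a ≤ 2 := by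
            calc (2 / 3 : ℝ≥0) * a ≤ 2 / 3 * 3 := mul_le_mul_right ha _
            _ = 2 := by norm_num
          have h2 : (0 : ℝ≥0) < b - 3 := tsub_pos_of_lt hb
          calc (2 / 3 : ℝ≥0) * a ≤ 2 := h1
          _ < 2 + (b - 3) := lt_add_of_pos_right _ h2
        · rw [hs_ge a ha.le, hs_ge b (ha.le.trans hab.le)]
          exact add_lt_add_right (tsub_lt_tsub_right_of_le ha.le hab) _
    · intro v
      rcases le_or_gt v 2 with hv | hv
      · refine ⟨(3 / 2 : ℝ≥0) * v, ?_⟩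
        have ht : (3 / 2 : ℝ≥0) * v ≤ 3 := by
          calc (3 / 2 : ℝ≥0) * v ≤ 3 / 2 * 2 := mul_le_mul_right hv _
          _ = 3 := by norm_num
        rw [hs_le _ ht, ← mul_assoc]
        norm_num
      · refine ⟨v + 1, ?_⟩
        have h3 : (3 : ℝ≥0) ≤ v + 1 := by
          have : (2 : ℝ≥0) ≤ v := hv.le
          calc (3 : ℝ≥0) = 2 + 1 := by norm_num
          _ ≤ v + 1 := add_le_add_left this 1
        rw [hs_ge _ h3]
        have : v + 1 - 3 = v - 2 := by
          rw [show (3 : ℝ≥0) = 2 + 1 by norm_num, tsub_add_eq_tsub_tsub_swap,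
            add_tsub_cancel_right]
        rw [this, add_tsub_cancel_of_le hv.le]
    · simp [hs_def, zero_tsub]
  have hs_id : ∀ t : ℝ≥0, 3 ≤ t → 1 + s t = t := by
    intro t ht
    rw [hs_ge t ht, ← add_assoc]
    norm_num
    exact add_tsub_cancel_of_le ht
  have hid_Hplus : Hplus (id : ℝ≥0 → ℝ≥0) :=
    ⟨continuous_id, strictMono_id, Function.surjective_id, rfl⟩
  -- main claim: V ⊆ {x₀}
  have hmain : ∀ y ∈ V, y = x₀ := by
    intro y hy
    have horb : ∀ t : ℝ≥0, t ≤ 3 → dist (φ y t) x₀ < δ / 2 := horbV y hy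
    have hclose : ∀ t, dist (φ y t) (φ (φ y 1) (s t)) < δ := by
      intro t
      rw [hadd]
      rcases le_or_gt t 3 with ht | ht
      · have h1 : dist (φ y t) x₀ < δ / 2 := horb t ht
        have hst : (1 : ℝ≥0) + s t ≤ 3 := by
          rw [hs_le t ht]
          have : (2 / 3 : ℝ≥0) * t ≤ 2 := by
            calc (2 / 3 : ℝ≥0) * t ≤ 2 / 3 * 3 := mul_le_mul_right ht _
            _ = 2 := by norm_num
          calc (1 : ℝ≥0) + 2 / 3 * t ≤ 1 + 2 := add_le_add_right this 1
          _ = 3 := by norm_num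
        have h2 : dist (φ y (1 + s t)) x₀ < δ / 2 := horb _ hst
        calc dist (φ y t) (φ y (1 + s t)) ≤ dist (φ y t) x₀ + dist x₀ (φ y (1 + s t)) :=
          dist_triangle _ _ _
        _ < δ / 2 + δ / 2 := by rw [dist_comm x₀]; exact add_lt_add h1 h2
        _ = δ := add_halves δ
      · rw [hs_id t ht.le]
        simpa using hδ
    obtain ⟨t₀, ht₀, hcase⟩ := hδexp y (φ y 1) s hs_Hplus hclose
    have ht₀' : t₀ < 1 := by exact_mod_cast ht₀
    rcases hcase with hA | hB
    · -- φ y 1 = φ y t₀ : eventually periodic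
      set z := φ y t₀ with hz_def
      set p := 1 - t₀ with hp_def
      have hp : 0 < p := tsub_pos_of_lt ht₀'
      have hper : φ z p = z := by
        show φ (φ y t₀) p = z
        rw [hadd, hp_def, add_tsub_cancel_of_le ht₀'.le]
        exact hA
      have horbz : ∀ t, dist (φ x₀ t) (φ z (id t)) < δ := by
        intro t
        obtain ⟨r, hr, hzr⟩ := key z p hp hper t
        simp only [id_eq]
        rw [hzr, hfix, hz_def, hadd]
        have htr : t₀ + r ≤ 3 := by
          have : t₀ + r < 1 := by
            calc t₀ + r < t₀ + p := add_lt_add_right hr t₀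
            _ = 1 := add_tsub_cancel_of_le ht₀'.le
          calc t₀ + r ≤ 1 := this.le
          _ ≤ 3 := by norm_num
        calc dist x₀ (φ y (t₀ + r)) = dist (φ y (t₀ + r)) x₀ := dist_comm _ _
        _ < δ / 2 := horb _ htr
        _ < δ := half_lt_self hδ
      obtain ⟨t₁, -, hC | hD⟩ := hδexp x₀ z id hid_Hplus horbz
      · have hzx : z = x₀ := by rw [hC, hfix]
        exact hpre y t₀ (hz_def ▸ hzx)
      · have hzx : z = x₀ := hpre z t₁ hD.symm
        exact hpre y t₀ (hz_def ▸ hzx)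
    · -- y = φ y (1 + t₀) : y periodic
      set p := 1 + t₀ with hp_def
      have hp : 0 < p := lt_of_lt_of_le one_pos (le_add_of_nonneg_right zero_le)
      have hper : φ y p = y := by
        rw [hp_def, ← hadd]
        exact hB.symm
      have horby : ∀ t, dist (φ x₀ t) (φ y (id t)) < δ := by
        intro t
        obtain ⟨r, hr, hyr⟩ := key y p hp hper t
        simp only [id_eq]
        rw [hyr, hfix]
        have htr : r ≤ 3 := by
          calc r ≤ p := hr.le
          _ = 1 + t₀ := rfl
          _ ≤ 1 + 1 := add_le_add_right ht₀'.le 1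
          _ ≤ 3 := by norm_num
        calc dist x₀ (φ y r) = dist (φ y r) x₀ := dist_comm _ _
        _ < δ / 2 := horb _ htr
        _ < δ := half_lt_self hδ
      obtain ⟨t₁, -, hC | hD⟩ := hδexp x₀ y id hid_Hplus horby
      · rw [hC, hfix]
      · exact hpre y t₁ hD.symm
  have hVeq : V = {x₀} := by
    apply Set.Subset.antisymm
    · intro y hy
      exact hmain y hy
    · intro y hy
      simp only [Set.mem_singleton_iff] at hy
      rw [hy]
      exact hxV'
  rw [← hVeq]
  exact hVopen
end

section
/- Let φ be a positive expansive continuous semiflow on a metric space (X,d). If x₀ is an end point of φ (i.e., O⁺(x₀)={x₀} but O⁻(x₀)≠{x₀}), then the tail O⁻(x₀) is an open subset of X. -/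
open scoped NNReal
open Filter Topology

/-!
A point `z` close enough to the fixed point `x₀` has its orbit segment `φ z [0, 2]` of diameter
below the expansivity constant `δ` (for `ε = 1`). Comparing the orbit of `φ z 1` with that of `z`
reparametrised by `t ↦ t + min t 1` (the two agree exactly after time `1`), expansivity forces
`φ z a = φ z b` for some `a < b ≤ 2`, so the whole forward orbit of `z` is `φ z [0, 2]` and stays
`δ`-close to `x₀`. Expansivity once more, now against the constant orbit of `x₀`, puts `z` in
`O⁻(x₀)`. Hence `O⁻(x₀)` is a neighbourhood of `x₀`, and it is open because it contains the
preimage of itself under each continuous map `φ · T`.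
-/

open Function

theorem Function.Periodic.exists_lt_apply_eq_nnreal {α : Type*} {f : ℝ≥0 → α} {c : ℝ≥0}
    (h : Periodic f c) (hc : 0 < c) (t : ℝ≥0) : ∃ r < c, f t = f r := by
  set n := ⌊t / c⌋₊
  have hle : n * c ≤ t := (le_div_iff₀ hc).1 (Nat.floor_le zero_le)
  have hlt : t < (n + 1) * c := (div_lt_iff₀ hc).1 (Nat.lt_floor_add_one _)
  refine ⟨t - n * c, ?_, ?_⟩
  · rw [tsub_lt_iff_left hle]
    linarith
  · rw [← h.nat_mul n (t - n * c), tsub_add_cancel_of_le hle]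

theorem hplus_add_min_one : Hplus fun t : ℝ≥0 => t + min t 1 := by
  refine ⟨by fun_prop, strictMono_id.add_monotone (monotone_id.min monotone_const), ?_, by simp⟩
  intro u
  rcases le_total u 2 with hu | hu
  · refine ⟨u / 2, ?_⟩
    have : u / 2 ≤ 1 := by rw [div_le_iff₀ (two_pos : (0 : ℝ≥0) < 2)]; simpa using hu
    simp only [min_eq_left this, add_halves]
  · refine ⟨u - 1, ?_⟩
    have : 1 ≤ u - 1 := le_tsub_of_add_le_left (by norm_num [hu])
    simp only [min_eq_right this, tsub_add_cancel_of_le (one_le_two.trans hu)]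

theorem apply_eq_of_posOrbit_eq_singleton {X : Type*} {φ : X → ℝ≥0 → X} {x : X}
    (h : posOrbit φ x = {x}) (t : ℝ≥0) : φ x t = x := by
  have : φ x t ∈ posOrbit φ x := Set.mem_range_self t
  rwa [h, Set.mem_singleton_iff] at this

namespace IsSemiflow

variable {X : Type*} [TopologicalSpace X] {φ : X → ℝ≥0 → X}

theorem exists_le_apply_eq_of_apply_eq (hφ : IsSemiflow φ) {z : X} {a b : ℝ≥0} (hab : a < b)
    (h : φ z a = φ z b) (t : ℝ≥0) : ∃ r ≤ b, φ z t = φ z r := by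
  rcases le_or_gt t a with ht | ht
  · exact ⟨t, ht.trans hab.le, rfl⟩
  have hper : Periodic (φ (φ z a)) (b - a) := fun u => by
    rw [add_comm, ← hφ.2.2, hφ.2.2 z, add_tsub_cancel_of_le hab.le, ← h]
  obtain ⟨r, hr, hrt⟩ := hper.exists_lt_apply_eq_nnreal (tsub_pos_of_lt hab) (t - a)
  refine ⟨a + r, (lt_tsub_iff_left.1 hr).le, ?_⟩
  rw [← hφ.2.2, ← hrt, hφ.2.2, add_tsub_cancel_of_le ht.le]

theorem isOpen_preOrbit (hφ : IsSemiflow φ) {x : X} (h : preOrbit φ x ∈ 𝓝 x) :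
    IsOpen (preOrbit φ x) := by
  rw [isOpen_iff_mem_nhds]
  rintro y ⟨T, rfl⟩
  have hT : Continuous (φ · T) := hφ.1.comp (continuous_id.prodMk continuous_const)
  filter_upwards [hT.continuousAt.preimage_mem_nhds h] with z ⟨τ, hτ⟩
  exact ⟨T + τ, by rw [← hφ.2.2, hτ]⟩

theorem eventually_forall_mem_of_fixed (hφ : IsSemiflow φ) {x₀ : X} (hx₀ : ∀ t, φ x₀ t = x₀)
    {U : Set X} (hU : U ∈ 𝓝 x₀) {K : Set ℝ≥0} (hK : IsCompact K) :
    ∀ᶠ z in 𝓝 x₀, ∀ t ∈ K, φ z t ∈ U :=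
  hK.eventually_forall_of_forall_eventually fun t _ =>
    (hφ.1.tendsto (x₀, t)).eventually_mem (by rwa [hx₀])

end IsSemiflow

/-- `PosExpansive φ` unfolds to `∀ ε > 0, ∃ δ > 0, IsPosExpansiveConst φ ε δ`. -/
def IsPosExpansiveConst {X : Type*} [MetricSpace X] (φ : X → ℝ≥0 → X) (ε δ : ℝ) : Prop :=
  ∀ x y : X, ∀ s : ℝ≥0 → ℝ≥0, Hplus s →
    (∀ t, dist (φ x t) (φ y (s t)) < δ) →
    ∃ t₀ : ℝ≥0, (t₀ : ℝ) < ε ∧ (y = φ x t₀ ∨ x = φ y t₀)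

namespace IsPosExpansiveConst

variable {X : Type*} [MetricSpace X] {φ : X → ℝ≥0 → X} {ε δ : ℝ}

theorem mem_preOrbit (hδ : IsPosExpansiveConst φ ε δ) (hφ : IsSemiflow φ) {x₀ w : X}
    (hx₀ : ∀ t, φ x₀ t = x₀) (hw : ∀ t, dist (φ w t) x₀ < δ) : w ∈ preOrbit φ x₀ := by
  obtain ⟨t₀, -, h | h⟩ := hδ x₀ w id ⟨continuous_id, strictMono_id, surjective_id, rfl⟩
    fun t => by simpa [hx₀, dist_comm] using hw t
  · exact ⟨0, by rw [hφ.2.1, h, hx₀]⟩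
  · exact ⟨t₀, h.symm⟩

theorem exists_lt_apply_eq (hδ : IsPosExpansiveConst φ 1 δ) (hφ : IsSemiflow φ) {z : X}
    (hz : ∀ t ≤ 2, ∀ u ≤ 2, dist (φ z t) (φ z u) < δ) :
    ∃ a b, a < b ∧ b ≤ 2 ∧ φ z a = φ z b := by
  have hclose : ∀ t, dist (φ (φ z 1) t) (φ z (t + min t 1)) < δ := by
    intro t
    rw [hφ.2.2]
    rcases le_total t 1 with ht | ht
    · apply hz
      · calc 1 + t ≤ 1 + 1 := by gcongr
          _ = 2 := one_add_one_eq_two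
      · calc t + min t 1 ≤ 1 + 1 := add_le_add ht (min_le_right t 1)
          _ = 2 := one_add_one_eq_two
    · rw [min_eq_right ht, add_comm, dist_self]
      simpa using hz 0 zero_le 0 zero_le
  obtain ⟨t₀, ht₀, hcase⟩ := hδ (φ z 1) z _ hplus_add_min_one hclose
  replace ht₀ : t₀ < 1 := by exact_mod_cast ht₀
  rcases hcase with h | h
  · refine ⟨0, 1 + t₀, by positivity, ?_, ?_⟩
    · calc 1 + t₀ ≤ 1 + 1 := by gcongr
        _ = 2 := one_add_one_eq_two
    · rwa [hφ.2.1, ← hφ.2.2]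
  · exact ⟨t₀, 1, ht₀, one_le_two, h.symm⟩

theorem mem_preOrbit_of_dist_lt_half (hδ : IsPosExpansiveConst φ 1 δ) (hφ : IsSemiflow φ)
    {x₀ z : X} (hx₀ : ∀ t, φ x₀ t = x₀) (hz : ∀ t ≤ 2, dist (φ z t) x₀ < δ / 2) :
    z ∈ preOrbit φ x₀ := by
  have hδ₀ : 0 < δ / 2 := dist_nonneg.trans_lt (hz 0 zero_le)
  obtain ⟨a, b, hab, hb, h⟩ := hδ.exists_lt_apply_eq hφ fun t ht u hu =>
    calc dist (φ z t) (φ z u) ≤ dist (φ z t) x₀ + dist (φ z u) x₀ := dist_triangle_right _ _ _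
      _ < δ / 2 + δ / 2 := add_lt_add (hz t ht) (hz u hu)
      _ = δ := add_halves δ
  refine hδ.mem_preOrbit hφ hx₀ fun t => ?_
  obtain ⟨r, hr, hrt⟩ := hφ.exists_le_apply_eq_of_apply_eq hab h t
  rw [hrt]
  exact (hz r (hr.trans hb)).trans (half_lt_self (by linarith))

end IsPosExpansiveConst

theorem stmt5 {X : Type*} [MetricSpace X] (φ : X → ℝ≥0 → X)
    (hφ : IsSemiflow φ) (hexp : PosExpansive φ)
    (x₀ : X) (hx₀ : IsEndPoint φ x₀) :
    IsOpen (preOrbit φ x₀) := by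
  obtain ⟨δ, hδ₀, hδ⟩ := hexp 1 one_pos
  have hfix := apply_eq_of_posOrbit_eq_singleton hx₀.1
  refine hφ.isOpen_preOrbit ?_
  filter_upwards [hφ.eventually_forall_mem_of_fixed hfix (Metric.ball_mem_nhds x₀ (half_pos hδ₀))
    isCompact_Icc] with z hz
  exact IsPosExpansiveConst.mem_preOrbit_of_dist_lt_half hδ hφ hfix fun t ht =>
    hz t ⟨zero_le, ht⟩
end

section
/- Let φ be a positive expansive continuous semiflow on a metric space (X,d). For every x in X, if φ_t(x) is a periodic point of φ for some t≥0, then x is a periodic point of φ. -/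
open scoped NNReal
open Filter Topology

theorem stmt6 {X : Type*} [MetricSpace X] (φ : X → ℝ≥0 → X)
    (hφ : IsSemiflow φ) (hexp : PosExpansive φ)
    (x : X) (t : ℝ≥0) (hper : IsPeriodicPoint φ (φ x t)) :
    IsPeriodicPoint φ x := by
  obtain ⟨hc, h0, hadd⟩ := hφ
  obtain ⟨⟨p, hp, hyp⟩, horb⟩ := hper
  have hcx : ∀ w : X, Continuous (fun u : ℝ≥0 => φ w u) := fun w =>
    hc.comp (continuous_const.prodMk continuous_id)
  set A : Set ℝ≥0 := {a | φ x (a + p) = φ x a} with hAdef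
  have htA : t ∈ A := by
    show φ x (t + p) = φ x t
    rw [← hadd]; exact hyp
  have hAne : A.Nonempty := ⟨t, htA⟩
  have hAclosed : IsClosed A :=
    isClosed_eq ((hcx x).comp (continuous_id.add continuous_const)) (hcx x)
  set a' : ℝ≥0 := sInf A with ha'def
  have ha'A : a' ∈ A := hAclosed.csInf_mem hAne (OrderBot.bddBelow A)
  have ha'le : a' ≤ t := csInf_le (OrderBot.bddBelow A) htA
  have hfwd : ∀ v, a' ≤ v → φ x (v + p) = φ x v := by
    intro v hv
    obtain ⟨u, rfl⟩ := exists_add_of_le hv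
    have e : a' + u + p = a' + p + u := by ring
    rw [e, ← hadd, ha'A, hadd]
  have hNp : ∀ v, a' ≤ v → ∀ N : ℕ, φ x (v + N * p) = φ x v := by
    intro v hv N
    induction N with
    | zero => simp
    | succ n ih =>
      have e : v + ((n + 1 : ℕ) : ℝ≥0) * p = (v + (n : ℝ≥0) * p) + p := by push_cast; ring
      rw [e, hfwd _ (le_trans hv le_self_add), ih]
  have key : a' = 0 := by
    by_contra h0'
    have hpos : 0 < a' := pos_iff_ne_zero.mpr h0'
    set z : X := φ x (t + p) with hzdef
    set P : Set ℝ≥0 := {r | φ z r = z} with hPdef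
    have main : ∀ ε : ℝ≥0, 0 < ε → ε ≤ p → ∃ q ∈ P, 0 < q ∧ q < ε := by
      intro ε hε hεp
      obtain ⟨δ, hδ, hδspec⟩ := hexp (ε : ℝ) (by exact_mod_cast hε)
      obtain ⟨n, hn⟩ := exists_nat_ge (a' / p)
      set N : ℕ := n + 1 with hNdef
      set Np : ℝ≥0 := (N : ℝ≥0) * p with hNpdef
      have hNa : a' ≤ Np := by
        have h1 : a' ≤ (n : ℝ≥0) * p := by
          rw [div_le_iff₀ hp] at hn; exact hn
        calc a' ≤ (n : ℝ≥0) * p := h1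
          _ ≤ Np := by
            rw [hNpdef]
            apply mul_le_mul_left
            push_cast; simp [hNdef]
      have hpNp : p ≤ Np := by
        rw [hNpdef]
        apply le_mul_of_one_le_left (zero_le : 0 ≤ p)
        push_cast; simp [hNdef]
      -- continuity of the gap function at a'
      set g : ℝ≥0 → ℝ := fun v => dist (φ x v) (φ x (v + Np)) with hgdef
      have hgcont : Continuous g :=
        Continuous.dist (hcx x) ((hcx x).comp (continuous_id.add continuous_const))
      have hg0 : g a' = 0 := by
        simp only [hgdef]; rw [hNp a' le_rfl N, dist_self]
      obtain ⟨η, hη, hηs⟩ := Metric.continuousAt_iff.mp hgcont.continuousAt δ hδ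
      set c : ℝ≥0 := min a' (Real.toNNReal (η / 2)) with hcdef
      have hcpos : 0 < c := lt_min hpos (Real.toNNReal_pos.mpr (by linarith))
      have hca : c ≤ a' := min_le_left _ _
      set a : ℝ≥0 := a' - c with hadef
      have ha_lt : a < a' := tsub_lt_self hpos hcpos
      have hacoe : (a : ℝ) = (a' : ℝ) - (c : ℝ) := NNReal.coe_sub hca
      have hcle : (c : ℝ) ≤ η / 2 := by
        calc (c : ℝ) ≤ (Real.toNNReal (η / 2) : ℝ) := by exact_mod_cast min_le_right _ _
          _ = η / 2 := Real.coe_toNNReal _ (by linarith)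
      have hsmall : ∀ v : ℝ≥0, a ≤ v → v < a' → g v < δ := by
        intro v hv1 hv2
        have hd : dist v a' < η := by
          rw [NNReal.dist_eq]
          have h1 : (v : ℝ) ≤ (a' : ℝ) := by exact_mod_cast hv2.le
          have h2 : (a : ℝ) ≤ (v : ℝ) := by exact_mod_cast hv1
          rw [abs_of_nonpos (by linarith)]
          linarith
        have := hηs hd
        rw [Real.dist_eq, hg0, sub_zero, abs_of_nonneg dist_nonneg] at this
        exact this
      have hdist : ∀ u : ℝ≥0,
          dist (φ (φ x a) u) (φ (φ x (a + Np)) (id u)) < δ := by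
        intro u
        simp only [id]
        rw [hadd, hadd]
        rcases le_or_gt a' (a + u) with hcase | hcase
        · have e : a + Np + u = (a + u) + Np := by ring
          rw [e, hNp (a + u) hcase N, dist_self]
          exact hδ
        · have e : a + Np + u = (a + u) + Np := by ring
          rw [e]
          exact hsmall (a + u) le_self_add hcase
      have hidH : Hplus (fun u : ℝ≥0 => u) :=
        ⟨continuous_id, strictMono_id, Function.surjective_id, rfl⟩
      obtain ⟨t₀, ht₀ε, hcase⟩ :=
        hδspec (φ x a) (φ x (a + Np)) (fun u => u) hidH hdist
      have ht₀lt : t₀ < ε := by exact_mod_cast ht₀ε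
      have hAcontra : ∀ w : ℝ≥0, a' ≤ w → φ x a = φ x w → False := by
        intro w hw he
        have haA : a ∈ A := by
          show φ x (a + p) = φ x a
          rw [← hadd, he, hadd, hfwd w hw, ← he]
        exact absurd (csInf_le (OrderBot.bddBelow A) haA) ha_lt.not_ge
      rcases hcase with hleft | hright
      · -- φ x (a + Np) = φ (φ x a) t₀
        rw [hadd] at hleft
        rcases eq_or_lt_of_le (zero_le : 0 ≤ t₀) with ht₀0 | ht₀pos
        · exact absurd (hAcontra (a + Np) (le_trans hNa le_add_self)
            (by rw [hleft, ← ht₀0, add_zero])) not_false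
        · have ht₀Np : t₀ ≤ Np := le_trans (le_trans ht₀lt.le hεp) hpNp
          have hin : a + t₀ ∈ A := by
            show φ x (a + t₀ + p) = φ x (a + t₀)
            calc φ x (a + t₀ + p) = φ (φ x (a + t₀)) p := (hadd _ _ _).symm
              _ = φ (φ x (a + Np)) p := by rw [hleft]
              _ = φ x (a + Np + p) := hadd _ _ _
              _ = φ x (a + Np) := hfwd (a + Np) (le_trans hNa le_add_self)
              _ = φ x (a + t₀) := hleft
          have ha't₀ : a' ≤ a + t₀ := csInf_le (OrderBot.bddBelow A) hin
          set z₀ : X := φ x (a + t₀) with hz₀def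
          have h1 : φ z₀ (Np - t₀) = z₀ := by
            rw [hz₀def, hadd]
            have e : a + t₀ + (Np - t₀) = a + Np := by
              rw [add_assoc, add_tsub_cancel_of_le ht₀Np]
            rw [e, hleft]
          have h2 : φ z₀ ((N : ℝ≥0) * p) = z₀ := by
            rw [hz₀def, hadd, hNp (a + t₀) ha't₀ N]
          have hq : φ z₀ t₀ = z₀ := by
            calc φ z₀ t₀ = φ (φ z₀ (Np - t₀)) t₀ := by rw [h1]
              _ = φ z₀ ((Np - t₀) + t₀) := hadd _ _ _
              _ = φ z₀ ((N : ℝ≥0) * p) := by rw [tsub_add_cancel_of_le ht₀Np]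
              _ = z₀ := h2
          refine ⟨t₀, ?_, ht₀pos, ht₀lt⟩
          show φ z t₀ = z
          have hle : a + t₀ ≤ t + p :=
            add_le_add (le_trans ha_lt.le ha'le) (le_trans ht₀lt.le hεp)
          obtain ⟨r, hr⟩ := exists_add_of_le hle
          have e1 : (a + t₀) + r + t₀ = ((a + t₀) + t₀) + r := by ring
          calc φ z t₀ = φ x ((t + p) + t₀) := by rw [hzdef, hadd]
            _ = φ x ((a + t₀) + r + t₀) := by rw [← hr]
            _ = φ x (((a + t₀) + t₀) + r) := by rw [e1]
            _ = φ (φ x ((a + t₀) + t₀)) r := (hadd _ _ _).symm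
            _ = φ (φ (φ x (a + t₀)) t₀) r := by rw [hadd x (a + t₀) t₀, hadd]
            _ = φ (φ z₀ t₀) r := by rw [hz₀def]
            _ = φ z₀ r := by rw [hq]
            _ = φ x ((a + t₀) + r) := by rw [hz₀def, hadd]
            _ = φ x (t + p) := by rw [← hr]
            _ = z := by rw [hzdef]
      · -- φ x a = φ (φ x (a + Np)) t₀
        rw [hadd] at hright
        exact absurd (hAcontra (a + Np + t₀)
          (le_trans hNa (le_trans le_add_self le_self_add)) hright) not_false
    have hPclosed : IsClosed P := isClosed_eq (hcx z) continuous_const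
    have hrest : ∀ r : ℝ≥0, φ z r = z := by
      intro r
      have hmem : r ∈ closure P := by
        rw [Metric.mem_closure_iff]
        intro η hη
        obtain ⟨q, hqP, hq0, hqε⟩ := main (min p (Real.toNNReal (η / 2)))
          (lt_min hp (Real.toNNReal_pos.mpr (by linarith))) (min_le_left _ _)
        have hqη : (q : ℝ) < η := by
          have h1 : q < Real.toNNReal (η / 2) := lt_of_lt_of_le hqε (min_le_right _ _)
          have h2 : (q : ℝ) < η / 2 := by
            calc (q : ℝ) < (Real.toNNReal (η / 2) : ℝ) := by exact_mod_cast h1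
              _ = η / 2 := Real.coe_toNNReal _ (by linarith)
          linarith
        have hmul : ∀ k : ℕ, (k : ℝ≥0) * q ∈ P := by
          intro k
          induction k with
          | zero => show φ z _ = z; simp [h0]
          | succ m ih =>
            have e : ((m + 1 : ℕ) : ℝ≥0) * q = (m : ℝ≥0) * q + q := by push_cast; ring
            show φ z _ = z
            rw [e, ← hadd, ih]
            exact hqP
        set k : ℕ := ⌈(r : ℝ) / (q : ℝ)⌉₊ with hkdef
        refine ⟨(k : ℝ≥0) * q, hmul k, ?_⟩
        have hq0' : (0 : ℝ) < (q : ℝ) := by exact_mod_cast hq0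
        have h1 : (r : ℝ) ≤ (k : ℝ) * (q : ℝ) := by
          rw [← div_le_iff₀ hq0']
          exact Nat.le_ceil _
        have h2 : (k : ℝ) * (q : ℝ) < (r : ℝ) + (q : ℝ) := by
          have h3 : (k : ℝ) < (r : ℝ) / (q : ℝ) + 1 :=
            Nat.ceil_lt_add_one (div_nonneg r.coe_nonneg hq0'.le)
          have h5 : (k : ℝ) * (q : ℝ) < ((r : ℝ) / (q : ℝ) + 1) * (q : ℝ) :=
            mul_lt_mul_of_pos_right h3 hq0'
          rwa [add_mul, one_mul, div_mul_cancel₀ _ hq0'.ne'] at h5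
        rw [NNReal.dist_eq]
        push_cast
        rw [abs_of_nonpos (by linarith)]
        linarith
      exact hPclosed.closure_subset hmem
    apply horb
    have hzy : z = φ x t := htA
    rw [← hzy]
    ext w
    constructor
    · rintro ⟨r, rfl⟩
      exact hrest r
    · intro hw
      rw [Set.mem_singleton_iff] at hw
      exact ⟨0, by rw [h0, hw]⟩
  have hxA : φ x p = x := by
    have h := ha'A
    rw [key] at h
    have h' : φ x (0 + p) = φ x 0 := h
    rwa [zero_add, h0] at h'
  refine ⟨⟨p, hp, hxA⟩, ?_⟩
  intro hcon
  apply horb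
  have hall : ∀ s : ℝ≥0, φ x s = x := by
    intro s
    have : φ x s ∈ posOrbit φ x := ⟨s, rfl⟩
    rw [hcon] at this
    exact this
  rw [hall t]
  exact hcon
end

section
/- Let φ be a positive expansive continuous semiflow on a metric space (X,d), and let X_tail be the union of all tails of φ (pre-orbits of end points). Then for every t≥0 the restriction φ_t: X∖X_tail → X∖X_tail is injective. -/
open scoped NNReal
open Filter Topology

theorem stmt7 {X : Type*} [MetricSpace X] (φ : X → ℝ≥0 → X)
    (hφ : IsSemiflow φ) (hexp : PosExpansive φ) :
    ∀ t : ℝ≥0, Set.InjOn (fun x => φ x t) (Xtail φ)ᶜ := by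
  obtain ⟨hcont, hid, hadd⟩ := hφ
  intro t x hx y hy hxy
  simp only at hxy
  by_contra hne
  have hcx : Continuous (φ x) := hcont.comp (Continuous.prodMk_right x)
  have hcy : Continuous (φ y) := hcont.comp (Continuous.prodMk_right y)
  set A : Set ℝ≥0 := {s | φ x s = φ y s} with hA
  have hAc : IsClosed A := isClosed_eq hcx hcy
  have hAt : t ∈ A := hxy
  have hAup : ∀ s ∈ A, ∀ r, s ≤ r → r ∈ A := by
    intro s hs r hsr
    have h1 : φ x r = φ (φ x s) (r - s) := by rw [hadd, add_tsub_cancel_of_le hsr]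
    have h2 : φ y r = φ (φ y s) (r - s) := by rw [hadd, add_tsub_cancel_of_le hsr]
    show φ x r = φ y r
    rw [h1, h2, hs]
  set T := sInf A with hT
  have hTA : T ∈ A := hAc.csInf_mem ⟨t, hAt⟩ (OrderBot.bddBelow A)
  have hTpos : 0 < T := by
    rcases (show (0 : ℝ≥0) ≤ T from zero_le).lt_or_eq with h | h
    · exact h
    · exfalso; apply hne
      have : (0 : ℝ≥0) ∈ A := h ▸ hTA
      have := this
      simp only [hA, Set.mem_setOf_eq, hid] at this
      exact this
  have hlt : ∀ s, s < T → s ∉ A := fun s hs hsA =>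
    absurd (csInf_le (OrderBot.bddBelow A) hsA) (not_le.mpr hs)
  set z := φ x T with hz
  have hzy : φ y T = z := hTA.symm
  have hidHplus : Hplus id := ⟨continuous_id, strictMono_id, Function.surjective_id, rfl⟩
  -- arbitrarily small positive periods of z
  have hper : ∀ ε : ℝ, 0 < ε → ∃ p : ℝ≥0, 0 < p ∧ (p : ℝ) < ε ∧ φ z p = z := by
    intro ε hε
    obtain ⟨δ, hδ, hδspec⟩ := hexp ε hε
    obtain ⟨η, hη, hηx⟩ := Metric.continuousAt_iff.mp hcx.continuousAt (δ / 2) (by linarith)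
    obtain ⟨η', hη', hηy⟩ := Metric.continuousAt_iff.mp hcy.continuousAt (δ / 2) (by linarith)
    set c : ℝ≥0 := min T (Real.toNNReal (min η η' / 2)) with hc
    have hcpos : 0 < c := lt_min hTpos (by
      simp only [Real.toNNReal_pos]
      exact div_pos (lt_min hη hη') two_pos)
    have hcT : c ≤ T := min_le_left _ _
    have hcη : (c : ℝ) < min η η' := by
      have h1 : (c : ℝ) ≤ Real.toNNReal (min η η' / 2) := by
        exact_mod_cast min_le_right _ _
      have h2 : (Real.toNNReal (min η η' / 2) : ℝ) = min η η' / 2 :=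
        Real.coe_toNNReal _ (le_of_lt (div_pos (lt_min hη hη') two_pos))
      rw [h2] at h1
      linarith [lt_min hη hη']
    set s : ℝ≥0 := T - c with hs
    have hsT : s < T := tsub_lt_self hTpos hcpos
    have hsc : s + c = T := tsub_add_cancel_of_le hcT
    have hclose : ∀ r : ℝ≥0, dist (φ (φ x s) r) (φ (φ y s) r) < δ := by
      intro r
      rw [hadd, hadd]
      rcases le_or_gt T (s + r) with hTr | hTr
      · have : s + r ∈ A := hAup T hTA _ hTr
        simp only [hA, Set.mem_setOf_eq] at this
        rw [this, dist_self]
        exact hδ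
      · have hdist : dist (s + r) T < min η η' := by
          rw [NNReal.dist_eq]
          rw [abs_of_nonpos (sub_nonpos.mpr (by exact_mod_cast hTr.le))]
          have h1 : s ≤ s + r := le_self_add
          have h2 : (T : ℝ) - (s + r) ≤ (T : ℝ) - s := by
            have : (s : ℝ) ≤ s + r := by exact_mod_cast h1
            linarith
          have h3 : (T : ℝ) - s = c := by
            have h4 := congrArg NNReal.toReal hsc
            push_cast at h4
            linarith
          calc -((s + r : ℝ≥0) - (T : ℝ≥0) : ℝ) = (T : ℝ) - (s + r) := by push_cast; ring
            _ ≤ (T : ℝ) - s := h2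
            _ = c := h3
            _ < min η η' := hcη
        have hx' : dist (φ x (s + r)) z < δ / 2 := by
          have := hηx (lt_of_lt_of_le hdist (min_le_left _ _))
          rwa [← hz] at this
        have hy' : dist (φ y (s + r)) z < δ / 2 := by
          have := hηy (lt_of_lt_of_le hdist (min_le_right _ _))
          rwa [hzy] at this
        calc dist (φ x (s + r)) (φ y (s + r))
            ≤ dist (φ x (s + r)) z + dist z (φ y (s + r)) := dist_triangle _ _ _
          _ = dist (φ x (s + r)) z + dist (φ y (s + r)) z := by rw [dist_comm z]
          _ < δ / 2 + δ / 2 := by exact add_lt_add hx' hy'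
          _ = δ := by ring
    obtain ⟨t₀, ht₀ε, hcase⟩ := hδspec (φ x s) (φ y s) id hidHplus hclose
    have ht₀pos : 0 < t₀ := by
      rcases (show (0 : ℝ≥0) ≤ t₀ from zero_le).lt_or_eq with h | h
      · exact h
      · exfalso
        apply hlt s hsT
        show φ x s = φ y s
        rcases hcase with h' | h'
        · rw [h', ← h, hid]
        · rw [h', ← h, hid]
    refine ⟨t₀, ht₀pos, ht₀ε, ?_⟩
    rcases hcase with h' | h'
    · -- φ y s = φ (φ x s) t₀
      calc φ z t₀ = φ x (T + t₀) := by rw [hz, hadd]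
        _ = φ x ((s + t₀) + c) := by rw [← hsc]; congr 1; ring
        _ = φ (φ (φ x s) t₀) c := by simp only [hadd]
        _ = φ (φ y s) c := by rw [← h']
        _ = φ y T := by rw [hadd, hsc]
        _ = z := hzy
    · calc φ z t₀ = φ y (T + t₀) := by rw [← hzy, hadd]
        _ = φ y ((s + t₀) + c) := by rw [← hsc]; congr 1; ring
        _ = φ (φ (φ y s) t₀) c := by simp only [hadd]
        _ = φ (φ x s) c := by rw [← h']
        _ = φ x T := by rw [hadd, hsc]
        _ = z := rfl
  -- hence φ z r = z for all r
  have hcz : Continuous (φ z) := hcont.comp (Continuous.prodMk_right z)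
  set P : Set ℝ≥0 := {r | φ z r = z} with hP
  have hPc : IsClosed P := isClosed_eq hcz continuous_const
  have hPmul : ∀ p ∈ P, ∀ n : ℕ, (n : ℝ≥0) * p ∈ P := by
    intro p hp n
    induction n with
    | zero => simp only [Nat.cast_zero, zero_mul, hP, Set.mem_setOf_eq, hid]
    | succ n ih =>
      have : ((n + 1 : ℕ) : ℝ≥0) * p = (n : ℝ≥0) * p + p := by push_cast; ring
      rw [hP, Set.mem_setOf_eq, this, ← hadd, ih, hp]
  have hall : ∀ r : ℝ≥0, φ z r = z := by
    intro r
    have hmem : r ∈ closure P := by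
      rw [Metric.mem_closure_iff]
      intro η hη
      obtain ⟨p, hppos, hpη, hpz⟩ := hper η hη
      refine ⟨(⌊(r : ℝ) / p⌋₊ : ℝ≥0) * p, hPmul p hpz _, ?_⟩
      set n := ⌊(r : ℝ) / p⌋₊ with hn
      have hp0 : (0 : ℝ) < p := hppos
      have h1 : (n : ℝ) * p ≤ r := by
        have := Nat.floor_le (div_nonneg r.coe_nonneg hp0.le)
        calc (n : ℝ) * p ≤ ((r : ℝ) / p) * p := by nlinarith
          _ = r := div_mul_cancel₀ _ hp0.ne'
      have h2 : (r : ℝ) < (n + 1) * p := by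
        have := Nat.lt_floor_add_one ((r : ℝ) / p)
        calc (r : ℝ) = ((r : ℝ) / p) * p := (div_mul_cancel₀ _ hp0.ne').symm
          _ < (n + 1) * p := by nlinarith
      rw [NNReal.dist_eq]
      push_cast
      rw [abs_of_nonneg (by linarith)]
      nlinarith
    have := hPc.closure_subset hmem
    exact this
  have hend : IsEndPoint φ z := by
    constructor
    · ext w
      simp only [posOrbit, Set.mem_range, Set.mem_singleton_iff]
      constructor
      · rintro ⟨r, rfl⟩; exact hall r
      · rintro rfl; exact ⟨0, hid z⟩
    · intro hpre
      apply hne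
      have hxz : x ∈ preOrbit φ z := ⟨T, rfl⟩
      have hyz : y ∈ preOrbit φ z := ⟨T, hzy⟩
      rw [hpre] at hxz hyz
      rw [hxz, hyz]
  apply hx
  simp only [Xtail, Set.mem_iUnion, Set.mem_setOf_eq]
  exact ⟨z, hend, T, rfl⟩
end

section
/- The semiflow φ on [0,1] (with euclidean metric) defined by φ_t(x)=min{x+t,1} is a continuous semiflow and is positive expansive. -/
open scoped NNReal
open Filter Topology

theorem stmt12 (φ : Set.Icc (0:ℝ) 1 → ℝ≥0 → Set.Icc (0:ℝ) 1)
    (hdef : ∀ (x : Set.Icc (0:ℝ) 1) (t : ℝ≥0), (φ x t : ℝ) = min ((x : ℝ) + (t : ℝ)) 1) :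
    IsSemiflow φ ∧ PosExpansive φ := by
  constructor
  · refine ⟨?_, ?_, ?_⟩
    · have hfun : (fun p : Set.Icc (0:ℝ) 1 × ℝ≥0 => φ p.1 p.2) =
          fun p => ⟨min ((p.1 : ℝ) + (p.2 : ℝ)) 1,
            ⟨le_min (add_nonneg p.1.2.1 p.2.coe_nonneg) zero_le_one, min_le_right _ _⟩⟩ := by
        funext p; exact Subtype.ext (hdef p.1 p.2)
      rw [hfun]
      exact Continuous.subtype_mk
        (((continuous_subtype_val.comp continuous_fst).add
          (NNReal.continuous_coe.comp continuous_snd)).min continuous_const) _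
    · intro x
      apply Subtype.ext
      rw [hdef]
      simp [min_eq_left x.2.2]
    · intro x t s
      apply Subtype.ext
      rw [hdef, hdef, hdef]
      rcases le_total ((x : ℝ) + (t : ℝ)) 1 with h | h
      · rw [min_eq_left h]
        push_cast
        ring_nf
      · rw [min_eq_right h]
        have h1 : (1 : ℝ) + (s : ℝ) ≥ 1 := le_add_of_nonneg_right s.coe_nonneg
        rw [min_eq_right h1]
        have : (x : ℝ) + ((t + s : ℝ≥0) : ℝ) ≥ 1 := by
          push_cast
          linarith [s.coe_nonneg]
        rw [min_eq_right this]
  · intro ε hε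
    refine ⟨ε, hε, fun x y s hs h => ?_⟩
    have h0 := h 0
    rw [hs.2.2.2] at h0
    have hx0 : (φ x 0 : ℝ) = (x : ℝ) := by rw [hdef]; simp [min_eq_left x.2.2]
    have hy0 : (φ y 0 : ℝ) = (y : ℝ) := by rw [hdef]; simp [min_eq_left y.2.2]
    have hd : |(x : ℝ) - (y : ℝ)| < ε := by
      have := h0
      rw [Subtype.dist_eq, Real.dist_eq, hx0, hy0] at this
      exact this
    rcases le_total (x : ℝ) (y : ℝ) with hxy | hxy
    · refine ⟨(⟨(y : ℝ) - (x : ℝ), sub_nonneg.mpr hxy⟩ : ℝ≥0), ?_, Or.inl ?_⟩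
      · show (y : ℝ) - (x : ℝ) < ε
        calc (y : ℝ) - (x : ℝ) = |(x : ℝ) - (y : ℝ)| := by
              rw [abs_sub_comm, abs_of_nonneg (sub_nonneg.mpr hxy)]
          _ < ε := hd
      · apply Subtype.ext
        refine Eq.trans ?_ (hdef _ _).symm
        show (y : ℝ) = min ((x : ℝ) + ((y : ℝ) - (x : ℝ))) 1
        rw [show (x : ℝ) + ((y : ℝ) - (x : ℝ)) = (y : ℝ) by ring, min_eq_left y.2.2]
    · refine ⟨(⟨(x : ℝ) - (y : ℝ), sub_nonneg.mpr hxy⟩ : ℝ≥0), ?_, Or.inr ?_⟩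
      · show (x : ℝ) - (y : ℝ) < ε
        calc (x : ℝ) - (y : ℝ) = |(x : ℝ) - (y : ℝ)| :=
              (abs_of_nonneg (sub_nonneg.mpr hxy)).symm
          _ < ε := hd
      · apply Subtype.ext
        refine Eq.trans ?_ (hdef _ _).symm
        show (x : ℝ) = min ((y : ℝ) + ((x : ℝ) - (y : ℝ))) 1
        rw [show (y : ℝ) + ((x : ℝ) - (y : ℝ)) = (x : ℝ) by ring, min_eq_left x.2.2]
end

section
/- The semiflow φ on [0,1] defined by φ_t(x)=min{x·e^t,1} is a continuous semiflow that is not positive expansive. -/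
open scoped NNReal
open Filter Topology

theorem stmt13 (φ : Set.Icc (0:ℝ) 1 → ℝ≥0 → Set.Icc (0:ℝ) 1)
    (hdef : ∀ (x : Set.Icc (0:ℝ) 1) (t : ℝ≥0),
      (φ x t : ℝ) = min ((x : ℝ) * Real.exp (t : ℝ)) 1) :
    IsSemiflow φ ∧ ¬ PosExpansive φ := by
  constructor
  · refine ⟨?_, ?_, ?_⟩
    · have hc : Continuous (fun p : Set.Icc (0:ℝ) 1 × ℝ≥0 => ((φ p.1 p.2 : ℝ))) := by
        simp only [hdef]
        fun_prop
      exact continuous_induced_rng.2 hc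
    · intro x
      apply Subtype.ext
      rw [hdef]
      simp only [NNReal.coe_zero, Real.exp_zero, mul_one]
      exact min_eq_left x.2.2
    · intro x t s
      apply Subtype.ext
      rw [hdef, hdef, hdef]
      have hx0 : (0:ℝ) ≤ (x:ℝ) := x.2.1
      have hes : (1:ℝ) ≤ Real.exp s := Real.one_le_exp s.coe_nonneg
      have hadd : ((t + s : ℝ≥0) : ℝ) = (t:ℝ) + (s:ℝ) := by push_cast; ring
      rw [hadd, Real.exp_add]
      rcases le_or_gt ((x:ℝ) * Real.exp t) 1 with h | h
      · rw [min_eq_left h, mul_assoc]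
      · rw [min_eq_right h.le, one_mul, min_eq_right hes, min_eq_right]
        nlinarith [Real.exp_pos (s:ℝ)]
  · intro H
    obtain ⟨δ, hδ, hH⟩ := H 1 one_pos
    set δ' : ℝ := min δ 1 with hδ'def
    have hδ'0 : 0 < δ' := lt_min hδ one_pos
    have hδ'1 : δ' ≤ 1 := min_le_right _ _
    have hδ'δ : δ' ≤ δ := min_le_left _ _
    set a : ℝ := δ' / 2 * Real.exp (-2) with hadef
    have ha0 : 0 < a := by positivity
    have hexp2 : Real.exp (-2 : ℝ) ≤ 1 := Real.exp_le_one_iff.2 (by norm_num)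
    have ha_half : a ≤ δ' / 2 := by nlinarith
    have hb_eq : a * Real.exp 1 = δ' / 2 * Real.exp (-1) := by
      rw [hadef, mul_assoc, ← Real.exp_add]; norm_num
    have hexp1 : Real.exp (-1 : ℝ) ≤ 1 := Real.exp_le_one_iff.2 (by norm_num)
    have hb_half : a * Real.exp 1 ≤ δ' / 2 := by rw [hb_eq]; nlinarith
    have hb0 : 0 < a * Real.exp 1 := by positivity
    set x : Set.Icc (0:ℝ) 1 := ⟨a, ha0.le, by linarith⟩ with hxdef
    set y : Set.Icc (0:ℝ) 1 := ⟨a * Real.exp 1, hb0.le, by linarith⟩ with hydef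
    set s : ℝ≥0 → ℝ≥0 := fun t => Real.toNNReal (max ((t:ℝ) - 1) ((t:ℝ)/2)) with hsdef
    have hscoe : ∀ t : ℝ≥0, ((s t : ℝ≥0) : ℝ) = max ((t:ℝ) - 1) ((t:ℝ)/2) := by
      intro t
      rw [hsdef]
      simp only
      rw [Real.coe_toNNReal']
      have h2 : (0:ℝ) ≤ (t:ℝ)/2 := by positivity
      exact max_eq_left (le_trans h2 (le_max_right _ _))
    have hs : Hplus s := by
      refine ⟨?_, ?_, ?_, ?_⟩
      · rw [hsdef]
        exact continuous_real_toNNReal.comp (by fun_prop)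
      · intro u v huv
        have huv' : (u:ℝ) < (v:ℝ) := huv
        have hv0 : (0:ℝ) < (v:ℝ)/2 := by
          have := u.coe_nonneg; linarith
        have hvpos : (0:ℝ) < max ((v:ℝ) - 1) ((v:ℝ)/2) :=
          lt_of_lt_of_le hv0 (le_max_right _ _)
        rw [hsdef]
        simp only
        rw [Real.toNNReal_lt_toNNReal_iff hvpos]
        exact max_lt_max (by linarith) (by linarith)
      · intro w
        rcases le_or_gt (w:ℝ) 1 with hw | hw
        · refine ⟨2 * w, ?_⟩
          have : ((2 * w : ℝ≥0) : ℝ) = 2 * (w:ℝ) := by push_cast; ring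
          rw [hsdef]
          simp only [this]
          have h1 : 2 * (w:ℝ) - 1 ≤ 2 * (w:ℝ) / 2 := by linarith
          rw [max_eq_right h1]
          have : 2 * (w:ℝ) / 2 = (w:ℝ) := by ring
          rw [this, Real.toNNReal_coe]
        · refine ⟨w + 1, ?_⟩
          have hc : ((w + 1 : ℝ≥0) : ℝ) = (w:ℝ) + 1 := by push_cast; ring
          rw [hsdef]
          simp only [hc]
          have h1 : ((w:ℝ) + 1) / 2 ≤ (w:ℝ) + 1 - 1 := by linarith
          rw [max_eq_left h1]
          have : (w:ℝ) + 1 - 1 = (w:ℝ) := by ring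
          rw [this, Real.toNNReal_coe]
      · rw [hsdef]
        simp only [NNReal.coe_zero]
        norm_num
    have hclose : ∀ t, dist (φ x t) (φ y (s t)) < δ := by
      intro t
      rw [Subtype.dist_eq, Real.dist_eq, hdef, hdef]
      have hxc : ((x : Set.Icc (0:ℝ) 1) : ℝ) = a := rfl
      have hyc : ((y : Set.Icc (0:ℝ) 1) : ℝ) = a * Real.exp 1 := rfl
      rw [hxc, hyc, hscoe]
      have ht0 : (0:ℝ) ≤ (t:ℝ) := t.coe_nonneg
      rcases le_or_gt (t:ℝ) 2 with ht | ht
      · have hst : max ((t:ℝ) - 1) ((t:ℝ)/2) = (t:ℝ)/2 :=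
          max_eq_right (by linarith)
        rw [hst]
        have hA : a * Real.exp t ≤ δ' / 2 := by
          have : Real.exp (t:ℝ) ≤ Real.exp 2 := Real.exp_le_exp.2 ht
          rw [hadef, mul_assoc, ← Real.exp_add]
          have : Real.exp (-2 + (t:ℝ)) ≤ 1 := Real.exp_le_one_iff.2 (by linarith)
          nlinarith
        have hB : a * Real.exp 1 * Real.exp ((t:ℝ)/2) ≤ δ' / 2 := by
          rw [hadef, mul_assoc, mul_assoc, ← Real.exp_add, ← Real.exp_add]
          have : Real.exp (-2 + (1 + (t:ℝ)/2)) ≤ 1 := Real.exp_le_one_iff.2 (by linarith)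
          nlinarith
        have hA0 : 0 ≤ a * Real.exp t := by positivity
        have hB0 : 0 ≤ a * Real.exp 1 * Real.exp ((t:ℝ)/2) := by positivity
        have hA1 : a * Real.exp t < 1 := by linarith
        have hB1 : a * Real.exp 1 * Real.exp ((t:ℝ)/2) < 1 := by linarith
        rw [min_eq_left hA1.le, min_eq_left hB1.le]
        rw [abs_sub_lt_iff]
        constructor <;> linarith
      · have hst : max ((t:ℝ) - 1) ((t:ℝ)/2) = (t:ℝ) - 1 :=
          max_eq_left (by linarith)
        rw [hst]
        have : a * Real.exp 1 * Real.exp ((t:ℝ) - 1) = a * Real.exp t := by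
          rw [mul_assoc, ← Real.exp_add]; ring_nf
        rw [this, sub_self, abs_zero]
        exact hδ
    obtain ⟨t₀, ht₀, hcase⟩ := hH x y s hs hclose
    have hexp_t0 : (1:ℝ) ≤ Real.exp (t₀:ℝ) := Real.one_le_exp t₀.coe_nonneg
    have h1e : (1:ℝ) < Real.exp 1 := by
      have := Real.exp_lt_exp.2 (one_pos : (0:ℝ) < 1)
      rwa [Real.exp_zero] at this
    rcases hcase with h | h
    · have hy : (y : ℝ) = min (a * Real.exp (t₀:ℝ)) 1 := by
        rw [h, hdef]
      have hyc : ((y : Set.Icc (0:ℝ) 1) : ℝ) = a * Real.exp 1 := rfl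
      rw [hyc] at hy
      rcases le_or_gt (a * Real.exp (t₀:ℝ)) 1 with hle | hlt
      · rw [min_eq_left hle] at hy
        have heq : Real.exp 1 = Real.exp (t₀:ℝ) := mul_left_cancel₀ ha0.ne' hy
        have := Real.exp_injective heq
        linarith
      · rw [min_eq_right hlt.le] at hy
        nlinarith
    · have hx : (x : ℝ) = min (a * Real.exp 1 * Real.exp (t₀:ℝ)) 1 := by
        rw [h, hdef]
      have hxc : ((x : Set.Icc (0:ℝ) 1) : ℝ) = a := rfl
      rw [hxc] at hx
      have hmin : a < min (a * Real.exp 1 * Real.exp (t₀:ℝ)) 1 := by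
        apply lt_min
        · nlinarith
        · linarith
      linarith [hx ▸ hmin]
end

section
/- Let φ be a continuous semiflow on a metric space X and suppose z∈X and T>0 satisfy φ_T(z)≠z. Let T₀=inf{t≥0 : φ_t(z)=φ_T(z)}. Then the map t↦φ_t(z) restricted to [0,T₀] is injective. -/
open scoped NNReal
open Filter Topology

theorem stmt14 {X : Type*} [MetricSpace X] (φ : X → ℝ≥0 → X)
    (hφ : IsSemiflow φ) (z : X) (T : ℝ≥0) (hT : 0 < T) (hz : φ z T ≠ z) :
    Set.InjOn (φ z) (Set.Icc 0 (sInf {t : ℝ≥0 | φ z t = φ z T})) := by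
  obtain ⟨hc, h0, hadd⟩ := hφ
  set S : Set ℝ≥0 := {t : ℝ≥0 | φ z t = φ z T} with hS
  have hTS : T ∈ S := rfl
  have hInfle : sInf S ≤ T := csInf_le (OrderBot.bddBelow S) hTS
  have main : ∀ a b : ℝ≥0, a ∈ Set.Icc 0 (sInf S) → b ∈ Set.Icc 0 (sInf S) →
      φ z a = φ z b → a < b → False := by
    intro a b ha hb hab hlt
    set p := b - a with hp
    have hab' : a ≤ b := hlt.le
    have hpb : a + p = b := add_tsub_cancel_of_le hab'
    have hppos : 0 < p := tsub_pos_of_lt hlt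
    have per : ∀ s : ℝ≥0, φ z (a + s + p) = φ z (a + s) := by
      intro s
      have h1 : φ z (a + s) = φ (φ z a) s := (hadd z a s).symm
      have h2 : φ z (a + s + p) = φ (φ z b) s := by
        rw [hadd z b s, ← hpb]; ring_nf
      rw [h1, h2, hab]
    have pern : ∀ n : ℕ, ∀ s : ℝ≥0, φ z (a + s + n * p) = φ z (a + s) := by
      intro n
      induction n with
      | zero => simp
      | succ m ih =>
        intro s
        have he : a + s + ((m : ℕ) + 1 : ℕ) * p = a + (s + m * p) + p := by
          push_cast; ring
        rw [he, per (s + m * p), ← add_assoc, ih s]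
    have hbT : b ≤ T := hb.2.trans hInfle
    set r := T - a with hr
    have hrT : a + r = T := add_tsub_cancel_of_le (hab'.trans hbT)
    have hpr : p ≤ r := by
      have h3 : a + p ≤ T := hpb.le.trans hbT
      rwa [← hrT, add_le_add_iff_left] at h3
    have hppos' : (0:ℝ) < (p:ℝ) := hppos
    set k := ⌊(r : ℝ) / (p : ℝ)⌋₊ with hk
    have hkp : (k : ℝ) * (p:ℝ) ≤ (r:ℝ) := by
      have h4 := Nat.floor_le (by positivity : (0:ℝ) ≤ (r:ℝ)/(p:ℝ))
      calc (k:ℝ) * (p:ℝ) ≤ ((r:ℝ)/(p:ℝ)) * (p:ℝ) := by nlinarith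
        _ = (r:ℝ) := div_mul_cancel₀ _ hppos'.ne'
    have hkp2 : (r:ℝ) < ((k:ℝ) + 1) * (p:ℝ) := by
      have h5 := Nat.lt_floor_add_one ((r:ℝ)/(p:ℝ))
      calc (r:ℝ) = ((r:ℝ)/(p:ℝ)) * (p:ℝ) := (div_mul_cancel₀ _ hppos'.ne').symm
        _ < ((k:ℝ) + 1) * (p:ℝ) := by nlinarith
    have hkpn : (k : ℝ≥0) * p ≤ r := by
      rw [← NNReal.coe_le_coe]; push_cast; exact hkp
    set s := r - (k : ℝ≥0) * p with hs
    have hsk : s + (k : ℝ≥0) * p = r := tsub_add_cancel_of_le hkpn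
    have hsp : s < p := by
      rw [← NNReal.coe_lt_coe, hs, NNReal.coe_sub hkpn]
      push_cast
      linarith
    have hmem : a + s ∈ S := by
      have h6 := pern k s
      have h7 : a + s + (k : ℝ≥0) * p = T := by
        rw [add_assoc, hsk, hrT]
      rw [h7] at h6
      exact h6.symm
    have h8 : sInf S ≤ a + s := csInf_le (OrderBot.bddBelow S) hmem
    have h9 : a + s < b := by
      rw [← hpb]; exact (add_lt_add_iff_left a).mpr hsp
    exact absurd (h8.trans_lt (h9.trans_le hb.2)) (lt_irrefl _)
  intro x hx y hy hxy
  rcases lt_trichotomy x y with h | h | h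
  · exact absurd (main x y hx hy hxy h) not_false
  · exact h
  · exact absurd (main y x hy hx hxy.symm h) not_false
end

section
/- Let φ be a positive expansive continuous semiflow on a compact metric space (X,d), let y be a point whose positive limit set L⁺(y) is a closed orbit C of period P>0. Then y is a periodic point of φ. -/
open scoped NNReal
open Filter Topology

theorem stmt15 {X : Type*} [MetricSpace X] [CompactSpace X] (φ : X → ℝ≥0 → X)
    (hφ : IsSemiflow φ) (hexp : PosExpansive φ) (y : X)
    (hL : ∃ x : X, IsPeriodicPoint φ x ∧ limitSet φ y = posOrbit φ x ∧
      0 < sInf {t : ℝ≥0 | 0 < t ∧ φ x t = x}) :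
    IsPeriodicPoint φ y := by
  obtain ⟨x, hx, hLS, hP⟩ := hL
  obtain ⟨hcont, hzero, hadd⟩ := hφ
  set P : ℝ≥0 := sInf {t : ℝ≥0 | 0 < t ∧ φ x t = x} with hPdef
  have cφ : ∀ w : X, Continuous (fun t : ℝ≥0 => φ w t) := fun w =>
    hcont.comp (Continuous.prodMk continuous_const continuous_id)
  have cφ2 : ∀ t : ℝ≥0, Continuous (fun w : X => φ w t) := fun t =>
    hcont.comp (Continuous.prodMk continuous_id continuous_const)
  -- x is genuinely P-periodic
  have hxP : φ x P = x := by
    have hne : {t : ℝ≥0 | 0 < t ∧ φ x t = x}.Nonempty := hx.1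
    have hcl : P ∈ closure {t : ℝ≥0 | 0 < t ∧ φ x t = x} :=
      csInf_mem_closure hne (OrderBot.bddBelow _)
    have hsub : closure {t : ℝ≥0 | 0 < t ∧ φ x t = x} ⊆ {t : ℝ≥0 | φ x t = x} :=
      closure_minimal (fun t ht => ht.2) (isClosed_eq (cφ x) continuous_const)
    exact hsub hcl
  have hxnP : ∀ n : ℕ, φ x ((n : ℝ≥0) * P) = x := by
    intro n; induction n with
    | zero => simpa using hzero x
    | succ n ih =>
      have h1 : ((n + 1 : ℕ) : ℝ≥0) * P = (n : ℝ≥0) * P + P := by push_cast; ring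
      rw [h1, ← hadd, ih, hxP]
  have L1 : ∀ a : ℝ≥0, ∃ b, φ (φ x a) b = x := by
    intro a
    obtain ⟨n, hn⟩ := Archimedean.arch a hP
    rw [nsmul_eq_mul] at hn
    refine ⟨(n : ℝ≥0) * P - a, ?_⟩
    rw [hadd, add_tsub_cancel_of_le hn, hxnP n]
  have L2 : ∀ a q : ℝ≥0, φ (φ x a) q = φ x a → φ x q = x := by
    intro a q hq
    obtain ⟨b, hb⟩ := L1 a
    calc φ x q = φ (φ (φ x a) b) q := by rw [hb]
    _ = φ (φ x a) (b + q) := hadd _ _ _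
    _ = φ (φ x a) (q + b) := by rw [add_comm b q]
    _ = φ (φ (φ x a) q) b := (hadd _ _ _).symm
    _ = φ (φ x a) b := by rw [hq]
    _ = x := hb
  have L3 : ∀ q : ℝ≥0, 0 < q → φ x q = x → P ≤ q := fun q h1 h2 =>
    csInf_le (OrderBot.bddBelow _) ⟨h1, h2⟩
  -- Step B : the orbit of y asymptotically has period P
  have pieceB : ∀ ε' : ℝ, 0 < ε' →
      ∃ T : ℝ≥0, ∀ t, T ≤ t → dist (φ y (t + P)) (φ y t) < ε' := by
    intro ε' hε'
    by_contra hcon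
    push_neg at hcon
    have hcon' : ∀ n : ℕ, ∃ t, (n : ℝ≥0) ≤ t ∧ ε' ≤ dist (φ y (t + P)) (φ y t) := fun n =>
      hcon (n : ℝ≥0)
    choose f hf1 hf2 using hcon'
    obtain ⟨w, -, σ, hσ, hw⟩ := isCompact_univ.tendsto_subseq
      (fun n => Set.mem_univ (φ y (f n)))
    have hwL : w ∈ limitSet φ y := by
      refine ⟨fun n => f (σ n), ?_, hw⟩
      have hcast : Tendsto (fun n : ℕ => (n : ℝ≥0)) atTop atTop := tendsto_natCast_atTop_atTop
      exact tendsto_atTop_mono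
        (fun n => le_trans (Nat.cast_le.2 hσ.le_apply) (hf1 (σ n))) hcast
    have hwP : φ w P = w := by
      have hwx : w ∈ posOrbit φ x := hLS ▸ hwL
      obtain ⟨s₁, hs₁⟩ := hwx
      rw [← hs₁, hadd, add_comm, ← hadd, hxP]
    have hlim : Tendsto (fun n => dist (φ (φ y (f (σ n))) P) (φ y (f (σ n)))) atTop
        (𝓝 (dist (φ w P) w)) :=
      (Tendsto.comp ((cφ2 P).tendsto w) hw).dist hw
    have hge : ε' ≤ dist (φ w P) w := by
      refine ge_of_tendsto hlim (Eventually.of_forall fun n => ?_)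
      have h2 := hf2 (σ n)
      rwa [← hadd] at h2
    rw [hwP, dist_self] at hge
    linarith
  -- expansiveness constant for ε = P
  have hPR : (0 : ℝ) < (P : ℝ) := by exact_mod_cast hP
  obtain ⟨δ, hδ, hδexp⟩ := hexp (P : ℝ) hPR
  have hid : Hplus id := ⟨continuous_id, strictMono_id, Function.surjective_id, rfl⟩
  -- Step C : some forward point of y is periodic
  obtain ⟨t₁, Q₁, hQ₁, hper⟩ : ∃ t₁ Q₁ : ℝ≥0, 0 < Q₁ ∧ φ y (t₁ + Q₁) = φ y t₁ := by
    obtain ⟨T, hT⟩ := pieceB δ hδ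
    obtain ⟨t₀, ht₀, hcase⟩ := hδexp (φ y T) (φ y (T + P)) id hid (by
      intro t
      simp only [id]
      rw [hadd, hadd]
      have h1 : T + P + t = (T + t) + P := by ring
      rw [h1, dist_comm]
      exact hT (T + t) le_self_add)
    have ht₀P : t₀ < P := by exact_mod_cast ht₀
    rcases hcase with h | h
    · rw [hadd] at h
      refine ⟨T + t₀, P - t₀, tsub_pos_of_lt ht₀P, ?_⟩
      rw [add_assoc, add_tsub_cancel_of_le ht₀P.le, h]
    · rw [hadd] at h
      refine ⟨T, P + t₀, lt_of_lt_of_le hP le_self_add, ?_⟩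
      rw [← add_assoc]
      exact h.symm
  -- Step D : the set of Q₁-periodic times
  set A : Set ℝ≥0 := {t | φ y (t + Q₁) = φ y t} with hAdef
  have L4 : ∀ c q : ℝ≥0, φ y (c + q) = φ y c → ∀ s, φ y ((c + s) + q) = φ y (c + s) := by
    intro c q hc s
    have h1 : (c + s) + q = (c + q) + s := by ring
    rw [h1, ← hadd, hc, hadd]
  have hAclosed : IsClosed A :=
    isClosed_eq ((cφ y).comp (continuous_add_right Q₁)) (cφ y)
  have hAne : A.Nonempty := ⟨t₁, hper⟩
  set S : ℝ≥0 := sInf A with hSdef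
  have hSA : φ y (S + Q₁) = φ y S := hAclosed.csInf_mem hAne (OrderBot.bddBelow _)
  have hup : ∀ t, S ≤ t → φ y (t + Q₁) = φ y t := by
    intro t ht
    have h1 : t = S + (t - S) := (add_tsub_cancel_of_le ht).symm
    rw [h1]
    exact L4 S Q₁ hSA _
  -- Boost lemma: any periodic time is in A
  have L5 : ∀ c q : ℝ≥0, 0 < q → φ y (c + q) = φ y c → φ y (c + Q₁) = φ y c := by
    intro c q hq hcq
    have hk : ∀ k : ℕ, φ y (c + (k : ℝ≥0) * q) = φ y c := by
      intro k; induction k with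
      | zero => simp
      | succ k ih =>
        have h1 : c + ((k + 1 : ℕ) : ℝ≥0) * q = (c + (k : ℝ≥0) * q) + q := by
          push_cast; ring
        rw [h1, L4 c q hcq ((k : ℝ≥0) * q), ih]
    obtain ⟨k, hk'⟩ := Archimedean.arch S hq
    rw [nsmul_eq_mul] at hk'
    have hm : φ y ((c + (k : ℝ≥0) * q) + Q₁) = φ y (c + (k : ℝ≥0) * q) :=
      hup _ (le_trans hk' le_add_self)
    calc φ y (c + Q₁) = φ (φ y c) Q₁ := (hadd _ _ _).symm
    _ = φ (φ y (c + (k : ℝ≥0) * q)) Q₁ := by rw [hk k]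
    _ = φ y ((c + (k : ℝ≥0) * q) + Q₁) := hadd _ _ _
    _ = φ y (c + (k : ℝ≥0) * q) := hm
    _ = φ y c := hk k
  -- Step E : Q₁ is a period of x, so P ≤ Q₁
  have hzL : φ y S ∈ limitSet φ y := by
    refine ⟨fun n => S + (n : ℝ≥0) * Q₁, ?_, ?_⟩
    · rw [tendsto_atTop]
      intro b
      obtain ⟨k, hk⟩ := Archimedean.arch b hQ₁
      rw [nsmul_eq_mul] at hk
      refine eventually_atTop.2 ⟨k, fun n hn => ?_⟩
      calc b ≤ (k : ℝ≥0) * Q₁ := hk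
      _ ≤ (n : ℝ≥0) * Q₁ := mul_le_mul_left (by exact_mod_cast hn) Q₁
      _ ≤ S + (n : ℝ≥0) * Q₁ := le_add_self
    · have hc : ∀ n : ℕ, φ y (S + (n : ℝ≥0) * Q₁) = φ y S := by
        intro n; induction n with
        | zero => simp
        | succ n ih =>
          have h1 : S + ((n + 1 : ℕ) : ℝ≥0) * Q₁ = (S + (n : ℝ≥0) * Q₁) + Q₁ := by
            push_cast; ring
          rw [h1, hup _ le_self_add]
          exact ih
      simp only [hc]
      exact tendsto_const_nhds
  have hzx : φ y S ∈ posOrbit φ x := by rw [← hLS]; exact hzL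
  obtain ⟨s₀, hs₀⟩ := hzx
  have hxQ₁ : φ x Q₁ = x := by
    refine L2 s₀ Q₁ ?_
    rw [hs₀, hadd, hSA]
  have hPQ₁ : P ≤ Q₁ := L3 Q₁ hQ₁ hxQ₁
  -- Step F : S = 0
  have hS0 : S = 0 := by
    by_contra hS0
    have hSpos : 0 < S := pos_iff_ne_zero.2 hS0
    have hG : ContinuousAt (fun a : ℝ≥0 => dist (φ y (a + Q₁)) (φ y a)) S :=
      (Continuous.dist ((cφ y).comp (continuous_add_right Q₁)) (cφ y)).continuousAt
    have hev : ∀ᶠ a in 𝓝 S, dist (φ y (a + Q₁)) (φ y a) < δ := by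
      have h0 : dist (φ y (S + Q₁)) (φ y S) < δ := by
        rw [hSA, dist_self]; exact hδ
      exact hG (Iio_mem_nhds h0)
    obtain ⟨η, hη, hηball⟩ := Metric.eventually_nhds_iff.1 hev
    set η₀ : ℝ≥0 := Real.toNNReal (η / 2) with hη₀def
    have hη₀pos : 0 < η₀ := Real.toNNReal_pos.2 (by linarith)
    set η'' : ℝ≥0 := min (min η₀ S) P with hη''def
    have hη''pos : 0 < η'' := lt_min (lt_min hη₀pos hSpos) hP
    have hη''S : η'' ≤ S := le_trans (min_le_left _ _) (min_le_right _ _)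
    have hη''P : η'' ≤ P := min_le_right _ _
    have hη''η₀ : η'' ≤ η₀ := le_trans (min_le_left _ _) (min_le_left _ _)
    set a : ℝ≥0 := S - η'' with hadef
    have haη : a + η'' = S := tsub_add_cancel_of_le hη''S
    have haS : a < S := by
      rw [← haη]
      exact lt_add_of_pos_right _ hη''pos
    have hanA : φ y (a + Q₁) ≠ φ y a := by
      intro hmem
      have hle : S ≤ a := csInf_le (OrderBot.bddBelow _) hmem
      exact absurd hle (not_le.2 haS)
    -- closeness of the two orbits
    have hclose : ∀ t : ℝ≥0, dist (φ (φ y a) t) (φ (φ y (a + Q₁)) (id t)) < δ := by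
      intro t
      simp only [id]
      rw [hadd, hadd]
      have h2 : a + Q₁ + t = (a + t) + Q₁ := by ring
      rw [h2]
      rcases le_or_gt η'' t with h | h
      · rw [hup (a + t) (by rw [← haη]; exact add_le_add_right h a), dist_self]
        exact hδ
      · rw [dist_comm]
        refine hηball ?_
        rw [NNReal.dist_eq]
        have hatS : a + t ≤ S := by
          rw [← haη]; exact add_le_add_right h.le a
        have h3 : |((a + t : ℝ≥0) : ℝ) - (S : ℝ)| = (S : ℝ) - ((a + t : ℝ≥0) : ℝ) := by
          rw [abs_sub_comm, abs_of_nonneg]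
          have h4 := (NNReal.coe_le_coe.2 hatS)
          linarith
        rw [h3]
        have h5 : (S : ℝ) = (a : ℝ) + (η'' : ℝ) := by
          rw [← haη]; push_cast; ring
        have h6 : (η'' : ℝ) ≤ η / 2 := by
          calc (η'' : ℝ) ≤ (η₀ : ℝ) := NNReal.coe_le_coe.2 hη''η₀
          _ = η / 2 := Real.coe_toNNReal _ (by linarith)
        have h7 : (0 : ℝ) ≤ (t : ℝ) := t.coe_nonneg
        push_cast
        linarith
    obtain ⟨t₀, ht₀, hcase⟩ := hδexp (φ y a) (φ y (a + Q₁)) id hid hclose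
    have ht₀P : t₀ < P := by exact_mod_cast ht₀
    have ht₀Q : t₀ < Q₁ := lt_of_lt_of_le ht₀P hPQ₁
    rcases hcase with h | h
    · -- φ y (a+Q₁) = φ y (a + t₀)
      rw [hadd] at h
      rcases lt_or_ge t₀ η'' with hlt | hge
      · rcases eq_zero_or_pos t₀ with h0 | hpos
        · refine hanA ?_
          rw [h, h0, add_zero]
        · -- point at a + t₀ < S is (Q₁ - t₀)-periodic
          have hbper : φ y ((a + t₀) + (Q₁ - t₀)) = φ y (a + t₀) := by
            rw [add_assoc, add_tsub_cancel_of_le ht₀Q.le, h]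
          have hbA : φ y ((a + t₀) + Q₁) = φ y (a + t₀) :=
            L5 _ _ (tsub_pos_of_lt ht₀Q) hbper
          have hle : S ≤ a + t₀ := csInf_le (OrderBot.bddBelow _) hbA
          have hlt2 : a + t₀ < S := by
            calc a + t₀ < a + η'' := add_lt_add_right hlt a
            _ = S := haη
          exact absurd hle (not_le.2 hlt2)
      · -- η'' ≤ t₀ < P : derive φ x t₀ = x, contradicting minimality of P
        have ht₀pos : 0 < t₀ := lt_of_lt_of_le hη''pos hge
        have haQ : a + Q₁ = S + (Q₁ - η'') := by
          rw [← haη, add_assoc, add_tsub_cancel_of_le (le_trans hη''P hPQ₁)]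
        have hwx : φ y (a + Q₁) = φ x (s₀ + (Q₁ - η'')) := by
          rw [haQ, ← hadd, ← hs₀, hadd]
        have hr : φ (φ x (s₀ + (Q₁ - η''))) (Q₁ - t₀) = φ x (s₀ + (Q₁ - η'')) := by
          rw [← hwx, h, hadd, add_assoc, add_tsub_cancel_of_le ht₀Q.le]
          exact h
        have hxr : φ x (Q₁ - t₀) = x := L2 _ _ hr
        have hxt : φ x t₀ = x := by
          conv_lhs => rw [← hxr]
          rw [hadd, tsub_add_cancel_of_le ht₀Q.le, hxQ₁]
        exact absurd (L3 t₀ ht₀pos hxt) (not_le.2 ht₀P)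
    · -- φ y a = φ y (a + Q₁ + t₀)
      rw [hadd] at h
      refine hanA (L5 a (Q₁ + t₀) (lt_of_lt_of_le hQ₁ le_self_add) ?_)
      rw [← add_assoc]
      exact h.symm
  -- conclude
  have hyQ : φ y Q₁ = y := by
    have h1 := hSA
    rw [hS0, zero_add, hzero] at h1
    exact h1
  refine ⟨⟨Q₁, hQ₁, hyQ⟩, ?_⟩
  intro hcon
  have hyt : ∀ t, φ y t = y := by
    intro t
    have hmem : φ y t ∈ posOrbit φ y := ⟨t, rfl⟩
    rwa [hcon, Set.mem_singleton_iff] at hmem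
  have hyL : limitSet φ y = {y} := by
    ext w
    constructor
    · rintro ⟨u, -, hu⟩
      simp only [hyt] at hu
      exact Set.mem_singleton_iff.2 (tendsto_nhds_unique hu tendsto_const_nhds)
    · intro hw
      rw [Set.mem_singleton_iff] at hw
      subst hw
      refine ⟨fun n => (n : ℝ≥0), tendsto_natCast_atTop_atTop, ?_⟩
      simp only [hyt]
      exact tendsto_const_nhds
  have hxy : x = y := by
    have hxmem : x ∈ posOrbit φ x := ⟨0, hzero x⟩
    rw [← hLS, hyL, Set.mem_singleton_iff] at hxmem
    exact hxmem
  refine hx.2 ?_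
  rw [← hLS, hyL, hxy]
end
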